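/- arXiv:math/0203095 — 13 statements merged into one kernel-verified Lean document; each statement's English description precedes it below -/
import Mathlib

section
/- Let M be a positive normal affine monoid of rank r (a finitely generated submonoid of ℤ^r with trivial unit group, normal, and gp(M) = ℤ^r). Then there exists a free basis {x₁,…,x_r} of ℤ^r such that the real cone ℝ₊M spanned by M in ℝ^r is contained in the simplicial cone ℝ₊x₁ + ⋯ + ℝ₊x_r. -/
open scoped NNReal
noncomputable section

/-- Real image of an integer vector. -/
def toR {r : ℕ} (v : Fin r → ℤ) : Fin r → ℝ := fun i => (v i : ℝ)

/-- The group of differences of a submonoid of an abelian group. -/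
def gp {G : Type*} [AddCommGroup G] (M : AddSubmonoid G) : AddSubgroup G :=
  AddSubgroup.closure (M : Set G)

/-- `M` is normal: `c • x ∈ M` for `x ∈ gp M`, `c ≥ 1` implies `x ∈ M`. -/
def IsNormalMonoid {G : Type*} [AddCommGroup G] (M : AddSubmonoid G) : Prop :=
  ∀ (c : ℕ) (x : G), 0 < c → x ∈ gp M → (c : ℤ) • x ∈ M → x ∈ M

/-- `M` is positive: no nontrivial units. -/
def IsPositiveMonoid {G : Type*} [AddCommGroup G] (M : AddSubmonoid G) : Prop :=
  ∀ x ∈ M, -x ∈ M → x = 0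

/-- The cone `ℝ₊M ⊆ ℝ^r` spanned by a submonoid `M ⊆ ℤ^r`. -/
def coneM {r : ℕ} (M : AddSubmonoid (Fin r → ℤ)) : Set (Fin r → ℝ) :=
  (Submodule.span ℝ≥0 (toR '' (M : Set (Fin r → ℤ))) : Submodule ℝ≥0 (Fin r → ℝ))

/-- The distinguished vector `e = (1,0) ∈ ℤ ⊕ ℤ^r`. -/
def eVec (r : ℕ) : ℤ × (Fin r → ℤ) := (1, 0)

/-- `M_i = (ℝ ⊕ ℝ₊M) ∩ (ℤ(x₁ - ie) + ⋯ + ℤ(x_r - ie))`, with `x_j - ie = (-i, x_j)`. -/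
def Mi {r : ℕ} (M : AddSubmonoid (Fin r → ℤ)) (x : Fin r → (Fin r → ℤ)) (i : ℕ) :
    Set (ℤ × (Fin r → ℤ)) :=
  {p | p ∈ AddSubgroup.closure (Set.range fun j => ((-(i : ℤ), x j) : ℤ × (Fin r → ℤ))) ∧
       toR p.2 ∈ coneM M}

/-- The submonoid (as a set) `ℤ₊e + M_i`. -/
def ZeMi {r : ℕ} (M : AddSubmonoid (Fin r → ℤ)) (x : Fin r → (Fin r → ℤ)) (i : ℕ) :
    Set (ℤ × (Fin r → ℤ)) :=
  {p | ∃ (z : ℕ) (m : ℤ × (Fin r → ℤ)), m ∈ Mi M x i ∧ p = (z : ℤ) • eVec r + m}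

open Filter Module

/-!
The nonzero generators of `M` admit no nontrivial nonnegative rational relation, since clearing
denominators would exhibit a nonzero unit of `M`. By Gordan's theorem there is therefore an
integral functional `φ` that is positive on them, and dividing by the gcd of its values makes it
primitive, `φ c = 1`. If `k₁, …, k_{r-1}` is a basis of `ker φ`, then `c - N • ∑ kⱼ, k₁, …, k_{r-1}`
is a basis of `ℤ^r` in which a generator `v` has coordinates `φ v` and `aⱼ(v) + N φ v`, where
`v - φ v • c = ∑ aⱼ(v) kⱼ`; for `N` large all of them are nonnegative, so `M`, and with it `ℝ₊M`,
lies in the simplicial cone of this basis.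
-/

lemma exists_mul_add_pos {R ι : Type*} [Ring R] [LinearOrder R] [IsStrictOrderedRing R]
    [Archimedean R] (s : Finset ι) {a : ι → R} (b : ι → R) (ha : ∀ i ∈ s, 0 < a i) :
    ∃ N : R, ∀ i ∈ s, 0 < N * a i + b i :=
  ((eventually_all_finset s).2 fun i hi =>
    (tendsto_atTop_add_const_right _ (b i)
      (tendsto_id.atTop_mul_const' (ha i hi))).eventually_gt_atTop 0).exists

lemma AddSubmonoid.zsmul_mem_of_nonneg {G : Type*} [AddCommGroup G] {P : AddSubmonoid G} {x : G}
    (hx : x ∈ P) {k : ℤ} (hk : 0 ≤ k) : k • x ∈ P := by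
  lift k to ℕ using hk
  simpa using P.nsmul_mem hx k

theorem exists_dual_forall_pos {K V ι : Type*} [Field K] [LinearOrder K] [IsStrictOrderedRing K]
    [Archimedean K] [AddCommGroup V] [Module K V] (s : Finset ι) (t : ι → V)
    (h : ∀ n : ι → K, (∀ i ∈ s, 0 ≤ n i) → ∑ i ∈ s, n i • t i = 0 → ∀ i ∈ s, n i = 0) :
    ∃ f : Dual K V, ∀ i ∈ s, 0 < f (t i) := by
  classical
  induction s using Finset.induction_on generalizing V with
  | empty => exact ⟨0, by simp⟩
  | insert a s ha ih =>
    have hrel : ∀ n : ι → K, (∀ i ∈ s, 0 ≤ n i) → ∀ q : K, 0 ≤ q →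
        q • t a + ∑ i ∈ s, n i • t i = 0 → q = 0 ∧ ∀ i ∈ s, n i = 0 := by
      intro n hn q hq hsum
      have hupd : ∀ i ∈ s, Function.update n a q i = n i := fun i hi =>
        Function.update_of_ne (ne_of_mem_of_not_mem hi ha) _ _
      have := h (Function.update n a q)
        (by simpa [Finset.forall_mem_insert, hq] using fun i hi => (hupd i hi).symm ▸ hn i hi)
        (by rwa [Finset.sum_insert ha, Function.update_self,
          Finset.sum_congr rfl fun i hi => by rw [hupd i hi]])
      exact ⟨by simpa using this a (Finset.mem_insert_self a s),
        fun i hi => hupd i hi ▸ this i (Finset.mem_insert_of_mem hi)⟩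
    obtain ⟨φ, hφ⟩ := ih t fun n hn hsum => (hrel n hn 0 le_rfl (by simpa using hsum)).2
    by_cases hφa : 0 < φ (t a)
    · exact ⟨φ, by simpa [hφa] using hφ⟩
    have hta : t a ≠ 0 := fun h0 => one_ne_zero (hrel 0 (by simp) 1 zero_le_one (by simp [h0])).1
    obtain ⟨χ, hχ⟩ := Projective.exists_dual_eq_one K hta
    set π := (K ∙ t a).mkQ
    -- A relation among the `π (t i)` lifts to `∑ n i • t i = q • t a`, and `q > 0` is impossible
    -- unless `n = 0`, since `φ` is positive on the `t i` and nonpositive on `t a`.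
    obtain ⟨ψ, hψ⟩ : ∃ ψ : Dual K (V ⧸ K ∙ t a), ∀ i ∈ s, 0 < ψ (π (t i)) := by
      refine ih (π ∘ t) fun n hn hsum => ?_
      obtain ⟨q, hq⟩ := Submodule.mem_span_singleton.1 <| (Submodule.Quotient.mk_eq_zero _).1 <|
        show π (∑ i ∈ s, n i • t i) = 0 by simpa using hsum
      rcases le_or_gt q 0 with hq0 | hq0
      · exact (hrel n hn (-q) (neg_nonneg.2 hq0) (by rw [← hq]; simp)).2
      · have hφsum : ∑ i ∈ s, n i * φ (t i) = q * φ (t a) := by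
          simpa using congrArg φ hq.symm
        have hnonneg : ∀ i ∈ s, 0 ≤ n i * φ (t i) := fun i hi =>
          mul_nonneg (hn i hi) (hφ i hi).le
        have hzero := (Finset.sum_eq_zero_iff_of_nonneg hnonneg).1 <| le_antisymm
          (hφsum ▸ mul_nonpos_of_nonneg_of_nonpos hq0.le (not_lt.1 hφa))
          (Finset.sum_nonneg hnonneg)
        exact fun i hi => (mul_eq_zero.1 (hzero i hi)).resolve_right (hφ i hi).ne'
    obtain ⟨N, hN⟩ := exists_mul_add_pos s (fun i => χ (t i)) hψ
    have hπa : π (t a) = 0 :=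
      (Submodule.Quotient.mk_eq_zero _).2 (Submodule.mem_span_singleton_self _)
    refine ⟨N • ψ ∘ₗ π + χ, Finset.forall_mem_insert _ _ _ |>.2 ⟨?_, ?_⟩⟩
    · simp [hπa, hχ]
    · simpa using hN

lemma Rat.exists_nat_mul_eq_int {ι : Type*} (s : Finset ι) (q : ι → ℚ) :
    ∃ D : ℕ, 0 < D ∧ ∀ i ∈ s, ∃ z : ℤ, (z : ℚ) = D * q i := by
  classical
  refine ⟨∏ i ∈ s, (q i).den, Finset.prod_pos fun i _ => (q i).den_pos, fun i hi => ?_⟩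
  refine ⟨(q i).num * ∏ j ∈ s.erase i, ((q j).den : ℤ), ?_⟩
  rw [← Finset.mul_prod_erase s _ hi]
  push_cast
  rw [← Rat.den_mul_eq_num]
  ring

lemma exists_int_dual_eq_nat_mul {r : ℕ} (f : Dual ℚ (Fin r → ℚ)) :
    ∃ (φ : Dual ℤ (Fin r → ℤ)) (D : ℕ), 0 < D ∧ ∀ v, (φ v : ℚ) = D * f (Int.cast ∘ v) := by
  classical
  obtain ⟨D, hD, hz⟩ :=
    Rat.exists_nat_mul_eq_int Finset.univ fun i => f fun j => if i = j then 1 else 0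
  choose z hz using fun i => hz i (Finset.mem_univ i)
  refine ⟨∑ i, z i • LinearMap.proj i, D, hD, fun v => ?_⟩
  rw [LinearMap.pi_apply_eq_sum_univ f, Finset.mul_sum]
  simp [hz, mul_comm, mul_left_comm]

lemma IsPositiveMonoid.nsmul_eq_zero_of_sum_eq_zero {G ι : Type*} [AddCommGroup G]
    {M : AddSubmonoid G} (hM : IsPositiveMonoid M) {s : Finset ι} {v : ι → G}
    (hv : ∀ i ∈ s, v i ∈ M) {m : ι → ℕ} (h : ∑ i ∈ s, m i • v i = 0) :
    ∀ i ∈ s, m i • v i = 0 := by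
  classical
  intro i hi
  refine hM _ (nsmul_mem (hv i hi) _) ?_
  rw [← Finset.add_sum_erase s _ hi, add_eq_zero_iff_eq_neg'] at h
  rw [← h]
  exact sum_mem fun j hj => nsmul_mem (hv j (Finset.mem_of_mem_erase hj)) _

lemma IsPositiveMonoid.exists_dual_pos {r : ℕ} {M : AddSubmonoid (Fin r → ℤ)}
    (hM : IsPositiveMonoid M) (S : Finset (Fin r → ℤ)) (hS : ∀ v ∈ S, v ∈ M) :
    ∃ φ : Dual ℤ (Fin r → ℤ), ∀ v ∈ S, v ≠ 0 → 0 < φ v := by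
  classical
  set T := S.filter (· ≠ 0)
  obtain ⟨f, hf⟩ : ∃ f : Dual ℚ (Fin r → ℚ), ∀ v ∈ T, 0 < f (Int.cast ∘ v) := by
    refine exists_dual_forall_pos T _ fun n hn hsum => ?_
    obtain ⟨D, hD, hz⟩ := Rat.exists_nat_mul_eq_int T n
    choose! z hz using hz
    have hz0 : ∀ v ∈ T, 0 ≤ z v := fun v hv => by
      exact_mod_cast (hz v hv).symm ▸ mul_nonneg (Nat.cast_nonneg D) (hn v hv)
    have htoNat : ∀ v ∈ T, (z v).toNat • v = z v • v := fun v hv => by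
      rw [← natCast_zsmul, Int.toNat_of_nonneg (hz0 v hv)]
    have hrel : ∑ v ∈ T, z v • v = 0 := by
      funext j
      have hj : ∑ v ∈ T, (z v : ℚ) * v j = 0 := by
        rw [Finset.sum_congr rfl fun v hv => by rw [hz v hv]]
        simpa [mul_assoc, Finset.mul_sum] using congrArg (fun w => (D : ℚ) * w j) hsum
      simpa using (by exact_mod_cast hj : ∑ v ∈ T, z v * v j = 0)
    intro v hv
    have hzv := hM.nsmul_eq_zero_of_sum_eq_zero (fun v hv => hS v (Finset.mem_filter.1 hv).1)
      ((Finset.sum_congr rfl htoNat).trans hrel) v hv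
    rw [htoNat v hv, smul_eq_zero] at hzv
    have hzv0 : z v = 0 := hzv.resolve_right (Finset.mem_filter.1 hv).2
    simpa [hzv0, hD.ne'] using (hz v hv).symm
  obtain ⟨φ, D, hD, hφ⟩ := exists_int_dual_eq_nat_mul f
  refine ⟨φ, fun v hv hv0 => ?_⟩
  have := hφ v ▸ mul_pos (Nat.cast_pos.2 hD) (hf v (Finset.mem_filter.2 ⟨hv, hv0⟩))
  exact_mod_cast this

lemma Module.Dual.exists_eq_smul_apply_eq_one {L : Type*} [AddCommGroup L] {φ : Dual ℤ L}
    (hφ : φ ≠ 0) : ∃ (g : ℤ) (ψ : Dual ℤ L) (c : L), 0 < g ∧ φ = g • ψ ∧ ψ c = 1 := by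
  set d := Submodule.IsPrincipal.generator (LinearMap.range φ)
  have hd : d ≠ 0 := by
    rwa [Ne, ← Submodule.IsPrincipal.eq_bot_iff_generator_eq_zero, LinearMap.range_eq_bot]
  have hdvd : ∀ v, |d| ∣ φ v := fun v =>
    (abs_dvd _ _).2 ((Submodule.IsPrincipal.mem_iff_generator_dvd _).1 ⟨v, rfl⟩)
  obtain ⟨c, hc⟩ : |d| ∈ LinearMap.range φ :=
    (Submodule.IsPrincipal.mem_iff_generator_dvd _).2 ((dvd_abs _ _).2 dvd_rfl)
  let ψ : Dual ℤ L :=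
    { toFun := fun v => φ v / |d|
      map_add' := fun v w => by rw [map_add, Int.add_ediv_of_dvd_left (hdvd v)]
      map_smul' := fun k v => by simp [Int.mul_ediv_assoc k (hdvd v)] }
  refine ⟨|d|, ψ, c, abs_pos.2 hd, LinearMap.ext fun v => ?_, ?_⟩
  · simp [ψ, Int.mul_ediv_cancel' (hdvd v)]
  · simp [ψ, hc, abs_pos.2 hd |>.ne']

lemma exists_basis_of_apply_eq_one {L : Type*} [AddCommGroup L] [Module.Free ℤ L]
    [Module.Finite ℤ L] (S : Finset L) (ψ : Dual ℤ L) {c : L} (hc : ψ c = 1)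
    (hS : ∀ v ∈ S, v ≠ 0 → 0 < ψ v) :
    ∃ (n : ℕ) (b : Basis (Fin n) ℤ L), ∀ v ∈ S, v ∈ AddSubmonoid.closure (Set.range b) := by
  classical
  set K := LinearMap.ker ψ
  let bK := finBasis ℤ K
  let a : L → Fin (finrank ℤ K) → ℤ := fun v => bK.repr ⟨v - ψ v • c, by simp [K, hc]⟩
  have ha : ∀ v, v - ψ v • c = ∑ j, a v j • (bK j : L) := fun v => by
    have := congrArg Subtype.val (bK.sum_repr ⟨v - ψ v • c, by simp [K, hc]⟩)
    rw [Submodule.coe_sum] at this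
    exact this.symm
  obtain ⟨N, hN⟩ := exists_mul_add_pos (S.filter (· ≠ 0) ×ˢ Finset.univ)
    (a := fun p => ψ p.1) (fun p => a p.1 p.2) fun p hp => by
      simp only [Finset.mem_product, Finset.mem_filter] at hp
      exact hS p.1 hp.1.1 hp.1.2
  set y := c - N • ∑ j, (bK j : L)
  have hy : ψ y = 1 := by simp [y, hc, map_sum]
  refine ⟨_, bK.mkFinCons y (fun k x hx hk => ?_) (fun z => ⟨-ψ z, ?_⟩), fun v hv => ?_⟩
  · simpa [hy, LinearMap.mem_ker.1 hx] using congrArg ψ hk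
  · simp [K, hy]
  rw [Basis.coe_mkFinCons]
  by_cases hv0 : v = 0
  · exact hv0 ▸ zero_mem _
  have hdecomp : v = ψ v • y + ∑ j, (N * ψ v + a v j) • (bK j : L) := by
    simp only [y, add_smul, Finset.sum_add_distrib, ← ha, smul_sub, mul_smul, Finset.smul_sum,
      smul_comm (ψ v) N]
    abel
  have hψv : 0 < ψ v := hS v hv hv0
  rw [hdecomp]
  refine add_mem (AddSubmonoid.zsmul_mem_of_nonneg (AddSubmonoid.subset_closure ?_) hψv.le)
    (sum_mem fun j _ => AddSubmonoid.zsmul_mem_of_nonneg (AddSubmonoid.subset_closure ?_) ?_)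
  · exact ⟨0, rfl⟩
  · exact ⟨j.succ, rfl⟩
  · exact (hN (v, j) (by simp [hv, hv0])).le

lemma exists_basis_mem_closure {L : Type*} [AddCommGroup L] [Module.Free ℤ L]
    [Module.Finite ℤ L] (S : Finset L) (φ : Dual ℤ L) (hS : ∀ v ∈ S, v ≠ 0 → 0 < φ v) :
    ∃ (n : ℕ) (b : Basis (Fin n) ℤ L), ∀ v ∈ S, v ∈ AddSubmonoid.closure (Set.range b) := by
  by_cases hφ : φ = 0
  · refine ⟨_, finBasis ℤ L, fun v hv => ?_⟩
    by_cases hv0 : v = 0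
    · exact hv0 ▸ zero_mem _
    · simpa [hφ] using hS v hv hv0
  obtain ⟨g, ψ, c, hg, rfl, hc⟩ := Dual.exists_eq_smul_apply_eq_one hφ
  exact exists_basis_of_apply_eq_one S ψ hc fun v hv hv0 =>
    pos_of_mul_pos_right (hS v hv hv0) hg.le

lemma coneM_subset_of_le_closure {r : ℕ} {M : AddSubmonoid (Fin r → ℤ)} {ι : Type*}
    (b : ι → Fin r → ℤ) (hM : M ≤ AddSubmonoid.closure (Set.range b)) :
    coneM M ⊆ (Submodule.span ℝ≥0 (Set.range fun j => toR (b j)) : Set (Fin r → ℝ)) := by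
  refine Submodule.span_le.2 ?_
  rintro _ ⟨m, hm, rfl⟩
  have hm' := hM hm
  clear hm
  induction hm' using AddSubmonoid.closure_induction with
  | mem x hx =>
    obtain ⟨j, rfl⟩ := hx
    exact Submodule.subset_span ⟨j, rfl⟩
  | zero =>
    have : toR (0 : Fin r → ℤ) = 0 := by ext; simp [toR]
    exact this ▸ zero_mem _
  | add x y _ _ hx hy =>
    have : toR (x + y) = toR x + toR y := by ext; simp [toR]
    exact this ▸ add_mem hx hy

theorem statement0_general {r : ℕ} (M : AddSubmonoid (Fin r → ℤ))
    (hFG : M.FG) (hpos : IsPositiveMonoid M) :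
    ∃ b : Module.Basis (Fin r) ℤ (Fin r → ℤ),
      coneM M ⊆ (Submodule.span ℝ≥0 (Set.range fun j => toR (b j)) : Set (Fin r → ℝ)) := by
  obtain ⟨S, rfl⟩ := hFG
  obtain ⟨φ, hφ⟩ := hpos.exists_dual_pos S fun v hv => AddSubmonoid.subset_closure hv
  obtain ⟨n, b, hb⟩ := exists_basis_mem_closure S φ hφ
  refine ⟨b.reindex (b.indexEquiv (Pi.basisFun ℤ (Fin r))), coneM_subset_of_le_closure _ ?_⟩
  rw [AddSubmonoid.closure_le, Basis.range_reindex]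
  exact hb

/-- a positive normal affine monoid of rank r with gp(M) = ℤ^r sits inside
a unimodular simplicial cone: there is a free basis x₁,…,x_r of ℤ^r with
ℝ₊M ⊆ ℝ₊x₁ + ⋯ + ℝ₊x_r. -/
theorem statement0 {r : ℕ} (M : AddSubmonoid (Fin r → ℤ))
    (hFG : M.FG) (hpos : IsPositiveMonoid M) (hnorm : IsNormalMonoid M)
    (hgp : gp M = ⊤) :
    ∃ b : Module.Basis (Fin r) ℤ (Fin r → ℤ),
      coneM M ⊆ (Submodule.span ℝ≥0 (Set.range fun j => toR (b j)) : Set (Fin r → ℝ)) :=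
  statement0_general M hFG hpos
end
end

section
/- Let C ⊆ ℝ^r be a rational polyhedral cone with C ∩ (−C) = {0} (a pointed cone). Then there exists a ℤ-basis {y₁,…,y_r} of the dual lattice (ℤ^r)* all of whose elements are nonnegative on C, i.e., the dual cone C* contains a lattice basis of (ℤ^r)*. -/
open scoped NNReal
noncomputable section

/-!
Since the cone is pointed, `0` is not in the convex hull of its nonzero generators, so Hahn–Banach
gives a functional that is strictly positive on them. Strict positivity on finitely many vectors is
an open condition stable under scaling, so some integer vector `y` satisfies it too. Smith normal
form writes `y = g • B i` with `g > 0` for a lattice basis `B`; then `B i` is strictly positive on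
the generators, and for `K` large the transvected basis `B i, B j + K • B i (j ≠ i)` is
nonnegative on them, hence on the whole cone.
-/

theorem zero_notMem_convexHull_of_pointed {E : Type*} [AddCommGroup E] [Module ℝ E]
    {P : Submodule ℝ≥0 E} (hP : ∀ x ∈ P, -x ∈ P → x = 0) {s : Finset E}
    (hsP : (s : Set E) ⊆ P) (hs0 : (0 : E) ∉ s) :
    (0 : E) ∉ convexHull ℝ (s : Set E) := by
  classical
  intro h
  obtain ⟨w, hw0, hw1, hwx⟩ := Finset.mem_convexHull'.1 h
  obtain ⟨z, hz, hwz⟩ : ∃ z ∈ s, 0 < w z := by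
    by_contra! hle
    linarith [Finset.sum_nonpos hle]
  have smul_mem (y : E) (hy : y ∈ s) : w y • y ∈ P :=
    P.smul_mem (⟨w y, hw0 y hy⟩ : ℝ≥0) (hsP hy)
  have hneg : -(w z • z) ∈ P := by
    rw [← Finset.add_sum_erase s _ hz] at hwx
    rw [neg_eq_of_add_eq_zero_right hwx]
    exact P.sum_mem fun y hy => smul_mem y (Finset.mem_of_mem_erase hy)
  rcases smul_eq_zero.1 (hP _ (smul_mem z hz) hneg) with h | h
  · exact hwz.ne' h
  · exact hs0 (h ▸ hz)

theorem exists_strongDual_pos_of_pointed {E : Type*} [NormedAddCommGroup E] [NormedSpace ℝ E]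
    {P : Submodule ℝ≥0 E} (hP : ∀ x ∈ P, -x ∈ P → x = 0) {s : Finset E}
    (hsP : (s : Set E) ⊆ P) (hs0 : (0 : E) ∉ s) :
    ∃ φ : StrongDual ℝ E, ∀ x ∈ s, 0 < φ x := by
  obtain ⟨φ, u, hφ0, hφs⟩ := geometric_hahn_banach_point_closed (convex_convexHull ℝ _)
    (s.finite_toSet.isCompact_convexHull (𝕜 := ℝ)).isClosed
    (zero_notMem_convexHull_of_pointed hP hsP hs0)
  exact ⟨φ, fun x hx => (map_zero φ ▸ hφ0).trans (hφs x (subset_convexHull ℝ _ hx))⟩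

section IntegerPoints

variable {n : Type*} [Fintype n]

def dotProductIntCastHom (x : n → ℝ) : (n → ℤ) →+ ℝ where
  toFun y := (Int.cast ∘ y) ⬝ᵥ x
  map_zero' := by simp [dotProduct]
  map_add' y z := by simp [dotProduct, add_mul, Finset.sum_add_distrib]

theorem exists_int_mem_of_isOpen_of_smul_mem {U : Set (n → ℝ)} (hU : IsOpen U)
    (hne : U.Nonempty) (hsmul : ∀ c : ℝ, 0 < c → ∀ x ∈ U, c • x ∈ U) :
    ∃ y : n → ℤ, (Int.cast ∘ y : n → ℝ) ∈ U := by
  obtain ⟨w, hw⟩ := hne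
  obtain ⟨ε, hε, hball⟩ := Metric.isOpen_iff.1 hU w hw
  set y : n → ℤ := fun i => round (ε⁻¹ * w i)
  have hclose : dist (Int.cast ∘ y : n → ℝ) (ε⁻¹ • w) < 1 :=
    (dist_pi_lt_iff one_pos).2 fun i => by
      rw [Real.dist_eq, abs_sub_comm]
      exact (abs_sub_round _).trans_lt (by norm_num)
  have hmem : ε • (Int.cast ∘ y : n → ℝ) ∈ U := hball <| by
    calc dist (ε • (Int.cast ∘ y : n → ℝ)) w
        = dist (ε • (Int.cast ∘ y : n → ℝ)) (ε • ε⁻¹ • w) := by rw [smul_inv_smul₀ hε.ne']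
      _ = ε * dist (Int.cast ∘ y : n → ℝ) (ε⁻¹ • w) := by
          rw [dist_smul₀, Real.norm_of_nonneg hε.le]
      _ < ε := mul_lt_of_lt_one_right hε hclose
  exact ⟨y, by simpa [inv_smul_smul₀ hε.ne'] using hsmul ε⁻¹ (inv_pos.2 hε) _ hmem⟩

theorem exists_int_dotProduct_pos_of_pointed {P : Submodule ℝ≥0 (n → ℝ)}
    (hP : ∀ x ∈ P, -x ∈ P → x = 0) {s : Finset (n → ℝ)} (hsP : (s : Set (n → ℝ)) ⊆ P)
    (hs0 : (0 : n → ℝ) ∉ s) :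
    ∃ y : n → ℤ, ∀ x ∈ s, 0 < (Int.cast ∘ y) ⬝ᵥ x := by
  classical
  obtain ⟨φ, hφ⟩ := exists_strongDual_pos_of_pointed hP hsP hs0
  have hφ_eq (x : n → ℝ) : (fun i => φ (Pi.single i 1)) ⬝ᵥ x = φ x := by
    conv_rhs => rw [pi_eq_sum_univ' x]
    simp [dotProduct, mul_comm]
  refine exists_int_mem_of_isOpen_of_smul_mem (U := {w | ∀ x ∈ s, 0 < w ⬝ᵥ x}) ?_
    ⟨_, fun x hx => (hφ_eq x).symm ▸ hφ x hx⟩ ?_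
  · rw [show {w | ∀ x ∈ s, 0 < w ⬝ᵥ x} = ⋂ x ∈ s, {w : n → ℝ | 0 < w ⬝ᵥ x} by ext; simp]
    refine isOpen_biInter_finset fun x _ => isOpen_lt continuous_const ?_
    exact continuous_finsetSum _ fun i _ => (continuous_apply i).mul continuous_const
  · intro c hc w hw x hx
    rw [smul_dotProduct, smul_eq_mul]
    exact mul_pos hc (hw x hx)

theorem dotProduct_nonneg_of_mem_span {w : n → ℝ} {s : Set (n → ℝ)}
    (hs : ∀ x ∈ s, 0 ≤ w ⬝ᵥ x) {x : n → ℝ} (hx : x ∈ Submodule.span ℝ≥0 s) :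
    0 ≤ w ⬝ᵥ x := by
  induction hx using Submodule.span_induction with
  | mem x h => exact hs x h
  | zero => simp
  | add x y _ _ hx hy => rw [dotProduct_add]; exact add_nonneg hx hy
  | smul c x _ hx => rw [NNReal.smul_def, dotProduct_smul, smul_eq_mul]; exact mul_nonneg c.2 hx

end IntegerPoints

namespace Module.Basis

variable {ι M : Type*} [AddCommGroup M]

theorem exists_eq_pos_smul [Finite ι] (b : Basis ι ℤ M) {y : M} (hy : y ≠ 0) :
    ∃ (B : Basis ι ℤ M) (i : ι) (g : ℤ), 0 < g ∧ y = g • B i := by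
  obtain ⟨n, ⟨bM, bN, f, a, hsnf⟩⟩ := (ℤ ∙ y).smithNormalForm b
  have : Module.Free ℤ M := Module.Free.of_basis b
  have hn : n = 1 := by
    have h := Module.finrank_eq_card_basis bN
    rwa [← (LinearEquiv.toSpanNonzeroSingleton ℤ M y hy).finrank_eq, Module.finrank_self,
      Fintype.card_fin, eq_comm] at h
  subst hn
  obtain ⟨c, hc⟩ : ∃ c : ℤ, y = c • (bN 0 : M) := by
    refine ⟨bN.repr ⟨y, Submodule.mem_span_singleton_self y⟩ 0, ?_⟩
    simpa using congrArg Subtype.val (bN.sum_repr ⟨y, Submodule.mem_span_singleton_self y⟩).symm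
  rw [hsnf, smul_smul] at hc
  rcases lt_trichotomy (c * a 0) 0 with hneg | hzero | hpos
  · refine ⟨bM.map (LinearEquiv.neg ℤ), f 0, -(c * a 0), neg_pos.2 hneg, ?_⟩
    simp [hc]
  · exact absurd (by rw [hc, hzero, zero_smul]) hy
  · exact ⟨bM, f 0, c * a 0, hpos, hc⟩

theorem exists_add_smul {R : Type*} [CommRing R] [Module R M] (B : Basis ι R M) (i : ι) (K : R) :
    ∃ b : Basis ι R M, b i = B i ∧ ∀ j ≠ i, b j = B j + K • B i := by
  classical
  have hf : (K • (B.sumCoords - B.coord i)) (B i) = 0 := by simp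
  refine ⟨B.map (LinearEquiv.transvection hf), ?_, fun j hj => ?_⟩
  · simp [LinearMap.transvection.apply, hf]
  · simp [LinearMap.transvection.apply, hj]

theorem exists_forall_nonneg {κ : Type*} [Finite ι] [Finite κ] (b₀ : Basis ι ℤ M)
    (φ : κ → M →+ ℝ) {y : M} (hy : ∀ k, 0 < φ k y) :
    ∃ b : Basis ι ℤ M, ∀ i k, 0 ≤ φ k (b i) := by
  rcases eq_or_ne y 0 with rfl | hy0
  · exact ⟨b₀, fun i k => absurd (hy k) (by simp)⟩
  obtain ⟨B, i, g, hg, rfl⟩ := b₀.exists_eq_pos_smul hy0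
  have hBi (k : κ) : 0 < φ k (B i) := by
    have := hy k
    rw [map_zsmul, zsmul_eq_mul] at this
    exact pos_of_mul_pos_right this (by exact_mod_cast hg.le)
  obtain ⟨K, hK⟩ := Finite.exists_le fun p : ι × κ => -φ p.2 (B p.1) / φ p.2 (B i)
  obtain ⟨N, hN⟩ := exists_nat_ge K
  obtain ⟨b, hbi, hbj⟩ := B.exists_add_smul i (N : ℤ)
  refine ⟨b, fun j k => ?_⟩
  rcases eq_or_ne j i with rfl | hj
  · exact hbi ▸ (hBi k).le
  · have := (div_le_iff₀ (hBi k)).1 ((hK (j, k)).trans hN)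
    rw [hbj j hj, map_add, map_zsmul, zsmul_eq_mul]
    push_cast
    linarith

end Module.Basis

/-- a pointed rational polyhedral cone in ℝ^r admits a ℤ-basis of the dual
lattice (identified with ℤ^r via the standard dot product) all of whose members are
nonnegative on the cone. -/
theorem statement1 {r : ℕ} (C : Set (Fin r → ℝ))
    (hrat : ∃ (m : ℕ) (v : Fin m → (Fin r → ℚ)),
      C = (Submodule.span ℝ≥0 (Set.range fun j => fun i => ((v j i : ℝ))) : Set (Fin r → ℝ)))
    (hpointed : ∀ x ∈ C, -x ∈ C → x = 0) :
    ∃ b : Module.Basis (Fin r) ℤ (Fin r → ℤ),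
      ∀ j : Fin r, ∀ x ∈ C, 0 ≤ ∑ i, (b j i : ℝ) * x i := by
  classical
  obtain ⟨m, v, rfl⟩ := hrat
  set s : Finset (Fin r → ℝ) := (Finset.univ.image fun j i => (v j i : ℝ)).erase 0
  obtain ⟨y, hy⟩ := exists_int_dotProduct_pos_of_pointed hpointed (s := s)
    (fun x hx => Submodule.subset_span (by simpa [s] using (Finset.mem_erase.1 hx).2))
    (Finset.notMem_erase 0 _)
  obtain ⟨b, hb⟩ := (Pi.basisFun ℤ (Fin r)).exists_forall_nonneg
    (fun x : s => dotProductIntCastHom x.1) fun x => hy x x.2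
  refine ⟨b, fun j x hx => dotProduct_nonneg_of_mem_span ?_ hx⟩
  rintro _ ⟨l, rfl⟩
  by_cases h : (fun i => (v l i : ℝ)) = 0
  · simp only [h, dotProduct_zero, le_refl]
  · exact hb j ⟨_, by simp [s, h]⟩
end
end

section
/- With the notation M_i = (ℝ ⊕ ℝ₊M) ∩ (ℤ(x₁ − ie) + ⋯ + ℤ(x_r − ie)) ⊆ ℤ^n for i ∈ ℤ₊ (where e = (1,0), n = r+1, and ℝ₊M ⊆ ℝ₊x₁ + ⋯ + ℝ₊x_r), the submonoids ℤ₊e + M_i of ℤ^n form an increasing chain: ℤ₊e + M₀ ⊆ ℤ₊e + M₁ ⊆ ℤ₊e + M₂ ⊆ ⋯. -/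
/-!
Write `m ∈ M_i` as `m = ∑ aⱼ (xⱼ - i e)`. Its projection `∑ aⱼ xⱼ` lies in `ℝ₊M ⊆ ℝ₊x₁ + ⋯ + ℝ₊x_r`,
and the `xⱼ` stay linearly independent over `ℝ`, so every `aⱼ ≥ 0`. Hence with `s = ∑ aⱼ ≥ 0`,
`m = s e + ∑ aⱼ (xⱼ - (i+1) e)`, and the second summand lies in `M_{i+1}`, with the same projection.
-/

open scoped NNReal
noncomputable section

lemma mem_addSubgroupClosure_range_iff {G ι : Type*} [AddCommGroup G] [Fintype ι] (g : ι → G)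
    (m : G) : m ∈ AddSubgroup.closure (Set.range g) ↔ ∃ a : ι → ℤ, ∑ j, a j • g j = m := by
  rw [← Submodule.span_int_eq_addSubgroupClosure, Submodule.mem_toAddSubgroup,
    Submodule.mem_span_range_iff_exists_fun]

lemma LinearIndependent.coeff_nonneg_of_sum_mem_span_nnreal {ι E : Type*} [Fintype ι]
    [AddCommGroup E] [Module ℝ E] {v : ι → E} (hv : LinearIndependent ℝ v) {a : ι → ℝ}
    (ha : ∑ j, a j • v j ∈ Submodule.span ℝ≥0 (Set.range v)) (j : ι) : 0 ≤ a j := by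
  obtain ⟨c, hc⟩ := Submodule.mem_span_range_iff_exists_fun ℝ≥0 |>.1 ha
  simp only [NNReal.smul_def] at hc
  rw [← Fintype.linearIndependent_iffₛ.1 hv _ _ hc j]
  exact (c j).coe_nonneg

lemma toR_sum_zsmul {ι : Type*} [Fintype ι] {r : ℕ} (a : ι → ℤ) (v : ι → Fin r → ℤ) :
    toR (∑ j, a j • v j) = ∑ j, (a j : ℝ) • toR (v j) := by
  funext k
  simp [toR]

lemma Module.Basis.linearIndependent_toR {r : ℕ} (b : Module.Basis (Fin r) ℤ (Fin r → ℤ)) :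
    LinearIndependent ℝ (fun j => toR (b j)) :=
  Matrix.linearIndependent_cols_iff_isUnit.2
    ((@isUnit_of_invertible _ _ _ ((Pi.basisFun ℤ (Fin r)).invertibleToMatrix b)).map
      (Int.castRingHom ℝ).mapMatrix)

lemma snd_sum_zsmul_mk {ι : Type*} [Fintype ι] {r : ℕ} (a : ι → ℤ) (k : ℤ)
    (x : ι → Fin r → ℤ) : (∑ j, a j • ((k, x j) : ℤ × (Fin r → ℤ))).2 = ∑ j, a j • x j := by
  simp [Prod.snd_sum]

lemma sum_zsmul_mk_neg_eq_add {ι : Type*} [Fintype ι] {r : ℕ} (a : ι → ℤ) (i : ℤ)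
    (x : ι → Fin r → ℤ) :
    ∑ j, a j • ((-i, x j) : ℤ × (Fin r → ℤ)) =
      (∑ j, a j) • eVec r + ∑ j, a j • ((-(i + 1), x j) : ℤ × (Fin r → ℤ)) := by
  ext
  · simp only [Prod.fst_add, Prod.fst_sum, Prod.smul_fst, eVec, smul_eq_mul, ← Finset.sum_mul]
    ring
  · simp [eVec, Prod.snd_sum]

theorem statement3_general {r : ℕ} (M : AddSubmonoid (Fin r → ℤ))
    (x : Fin r → (Fin r → ℤ)) (hx : ∃ b : Module.Basis (Fin r) ℤ (Fin r → ℤ), x = ⇑b)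
    (hcone : coneM M ⊆
      (Submodule.span ℝ≥0 (Set.range fun j => toR (x j)) : Set (Fin r → ℝ))) :
    ∀ i : ℕ, ZeMi M x i ⊆ ZeMi M x (i + 1) := by
  obtain ⟨b, rfl⟩ := hx
  rintro i _ ⟨z, m, ⟨hm, hm_cone⟩, rfl⟩
  obtain ⟨a, rfl⟩ := (mem_addSubgroupClosure_range_iff _ m).1 hm
  rw [snd_sum_zsmul_mk] at hm_cone
  have ha : ∀ j, 0 ≤ a j := fun j => by
    exact_mod_cast (Module.Basis.linearIndependent_toR b).coeff_nonneg_of_sum_mem_span_nnreal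
      (a := fun j => (a j : ℝ)) (by rw [← toR_sum_zsmul]; exact hcone hm_cone) j
  obtain ⟨s, hs⟩ := Int.eq_ofNat_of_zero_le (Finset.sum_nonneg fun j _ => ha j)
  refine ⟨z + s, ∑ j, a j • ((-((i + 1 : ℕ) : ℤ), b j) : ℤ × (Fin r → ℤ)), ⟨?_, ?_⟩, ?_⟩
  · exact (mem_addSubgroupClosure_range_iff _ _).2 ⟨a, rfl⟩
  · rwa [snd_sum_zsmul_mk]
  · rw [sum_zsmul_mk_neg_eq_add, hs]
    push_cast
    rw [add_smul, add_assoc]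

/-- the monoids ℤ₊e + M_i form an increasing chain. -/
theorem statement3 {r : ℕ} (M : AddSubmonoid (Fin r → ℤ))
    (hFG : M.FG) (hpos : IsPositiveMonoid M) (hnorm : IsNormalMonoid M) (hgp : gp M = ⊤)
    (x : Fin r → (Fin r → ℤ)) (hx : ∃ b : Module.Basis (Fin r) ℤ (Fin r → ℤ), x = ⇑b)
    (hcone : coneM M ⊆
      (Submodule.span ℝ≥0 (Set.range fun j => toR (x j)) : Set (Fin r → ℝ))) :
    ∀ i : ℕ, ZeMi M x i ⊆ ZeMi M x (i + 1) :=
  statement3_general M x hx hcone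
end
end

section
/- With M_i as above, the union M̄ = ⋃_{i≥0} (ℤ₊e + M_i) is a submonoid of ℤ^n, i.e., it is closed under addition and contains 0. -/
open scoped NNReal
noncomputable section

/-!
Write `s(v)` for the sum of the coordinates of `v ∈ ℤ^r` in the basis `x`. The lattice
`ℤ(x₁ - ie) + ⋯ + ℤ(x_r - ie)` consists of the vectors `(-i s(v), v)`, so `ℤ₊e + M_i` is the set of
`(a, v)` with `v ∈ ℝ₊M` and `a ≥ -i s(v)`. Since `ℝ₊M ⊆ ℝ₊x₁ + ⋯ + ℝ₊x_r`, `s` is nonnegative on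
`ℝ₊M`; hence these sets increase with `i`, and each is closed under addition.
-/

open Module

lemma toR_zero {r : ℕ} : toR (0 : Fin r → ℤ) = 0 := by
  funext i; simp [toR]

lemma toR_add {r : ℕ} (u v : Fin r → ℤ) : toR (u + v) = toR u + toR v := by
  funext i; simp [toR]

lemma toR_add_mem_coneM {r : ℕ} {M : AddSubmonoid (Fin r → ℤ)} {u v : Fin r → ℤ}
    (hu : toR u ∈ coneM M) (hv : toR v ∈ coneM M) : toR (u + v) ∈ coneM M := by
  rw [toR_add]
  exact Submodule.add_mem _ hu hv

lemma mem_closure_range_prod_basis_iff {ι N : Type*} [AddCommGroup N] (b : Basis ι ℤ N)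
    (c : ℤ) (p : ℤ × N) :
    p ∈ AddSubgroup.closure (Set.range fun j => (c, b j)) ↔ p.1 = c * b.sumCoords p.2 := by
  set f : N →ₗ[ℤ] ℤ × N := (c • b.sumCoords).prod LinearMap.id
  have hgen : (Set.range fun j => (c, b j)) = f '' Set.range b := by
    rw [← Set.range_comp]
    congr 1
    funext j
    simp [f]
  have hclosure : AddSubgroup.closure (Set.range fun j => (c, b j)) =
      (LinearMap.range f).toAddSubgroup := by
    rw [hgen, ← Submodule.span_int_eq_addSubgroupClosure, ← Submodule.map_span, b.span_eq,
      Submodule.map_top]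
  rw [hclosure, Submodule.mem_toAddSubgroup, LinearMap.mem_range]
  constructor
  · rintro ⟨v, rfl⟩
    simp [f]
  · intro h
    exact ⟨p.2, Prod.ext (by simp [f, h]) rfl⟩

lemma dotProduct_toR_eq {r : ℕ} (φ : (Fin r → ℤ) →ₗ[ℤ] ℤ) (u : Fin r → ℤ) :
    (fun i => (φ (Pi.single i 1) : ℝ)) ⬝ᵥ toR u = φ u := by
  simp only [dotProduct, toR]
  conv_rhs => rw [← Finset.univ_sum_single u, map_sum]
  push_cast
  refine Finset.sum_congr rfl fun i _ => ?_
  have hsingle : Pi.single i (u i) = u i • (Pi.single i 1 : Fin r → ℤ) := by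
    rw [← Pi.single_smul', smul_eq_mul, mul_one]
  rw [hsingle, map_smul, smul_eq_mul, Int.cast_mul, mul_comm]

lemma sumCoords_nonneg_of_mem_span {r : ℕ} (b : Basis (Fin r) ℤ (Fin r → ℤ)) {v : Fin r → ℤ}
    (hv : toR v ∈ Submodule.span ℝ≥0 (Set.range fun j => toR (b j))) :
    0 ≤ b.sumCoords v := by
  obtain ⟨t, ht⟩ := (Submodule.mem_span_range_iff_exists_fun ℝ≥0).mp hv
  have hsum : (b.sumCoords v : ℝ) = ∑ j, (t j : ℝ) := by
    rw [← dotProduct_toR_eq, ← ht, dotProduct_sum]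
    refine Finset.sum_congr rfl fun j _ => ?_
    rw [NNReal.smul_def, dotProduct_smul, dotProduct_toR_eq, b.sumCoords_self_apply]
    simp
  exact_mod_cast hsum ▸ Finset.sum_nonneg fun j _ => (t j).coe_nonneg

lemma mem_ZeMi_iff {r : ℕ} (M : AddSubmonoid (Fin r → ℤ)) (b : Basis (Fin r) ℤ (Fin r → ℤ))
    (i : ℕ) (p : ℤ × (Fin r → ℤ)) :
    p ∈ ZeMi M b i ↔ -(i : ℤ) * b.sumCoords p.2 ≤ p.1 ∧ toR p.2 ∈ coneM M := by
  simp only [ZeMi, Mi, mem_closure_range_prod_basis_iff, Set.mem_ofPred_eq]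
  constructor
  · rintro ⟨z, m, ⟨hm, hcone⟩, rfl⟩
    simp only [eVec, Prod.smul_mk, smul_eq_mul, mul_one, smul_zero, Prod.fst_add,
      Prod.snd_add, zero_add]
    exact ⟨by omega, hcone⟩
  · rintro ⟨hle, hcone⟩
    refine ⟨(p.1 + i * b.sumCoords p.2).toNat, (-(i : ℤ) * b.sumCoords p.2, p.2),
      ⟨rfl, hcone⟩, Prod.ext ?_ ?_⟩
    · simp only [eVec, Prod.smul_mk, smul_eq_mul, mul_one, Prod.fst_add]
      rw [Int.toNat_of_nonneg (by linarith)]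
      ring
    · simp [eVec]

theorem statement5_general {r : ℕ} (M : AddSubmonoid (Fin r → ℤ))
    (x : Fin r → (Fin r → ℤ)) (hx : ∃ b : Module.Basis (Fin r) ℤ (Fin r → ℤ), x = ⇑b)
    (hcone : coneM M ⊆
      (Submodule.span ℝ≥0 (Set.range fun j => toR (x j)) : Set (Fin r → ℝ))) :
    (0 : ℤ × (Fin r → ℤ)) ∈ (⋃ i : ℕ, ZeMi M x i) ∧
    ∀ p ∈ (⋃ i : ℕ, ZeMi M x i), ∀ q ∈ (⋃ i : ℕ, ZeMi M x i),
      p + q ∈ (⋃ i : ℕ, ZeMi M x i) := by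
  obtain ⟨b, rfl⟩ := hx
  have hnonneg : ∀ v, toR v ∈ coneM M → 0 ≤ b.sumCoords v :=
    fun v hv => sumCoords_nonneg_of_mem_span b (hcone hv)
  simp only [Set.mem_iUnion, mem_ZeMi_iff]
  have hzero : toR (0 : ℤ × (Fin r → ℤ)).2 ∈ coneM M := by
    rw [Prod.snd_zero, toR_zero]
    exact (Submodule.span ℝ≥0 _).zero_mem
  refine ⟨⟨0, by simp, hzero⟩, ?_⟩
  rintro p ⟨i, hp, hpcone⟩ q ⟨j, hq, hqcone⟩
  -- `-(i + j) s(p.2 + q.2) ≤ -i s(p.2) - j s(q.2)` because `s ≥ 0` on the cone.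
  refine ⟨i + j, ?_, toR_add_mem_coneM hpcone hqcone⟩
  have hp0 := hnonneg p.2 hpcone
  have hq0 := hnonneg q.2 hqcone
  simp only [Prod.fst_add, Prod.snd_add, map_add]
  push_cast
  nlinarith

/-- M̄ = ⋃ᵢ (ℤ₊e + M_i) is a submonoid of ℤ^n: it contains 0 and is
closed under addition. -/
theorem statement5 {r : ℕ} (M : AddSubmonoid (Fin r → ℤ))
    (hFG : M.FG) (hpos : IsPositiveMonoid M) (hnorm : IsNormalMonoid M) (hgp : gp M = ⊤)
    (x : Fin r → (Fin r → ℤ)) (hx : ∃ b : Module.Basis (Fin r) ℤ (Fin r → ℤ), x = ⇑b)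
    (hcone : coneM M ⊆
      (Submodule.span ℝ≥0 (Set.range fun j => toR (x j)) : Set (Fin r → ℝ))) :
    (0 : ℤ × (Fin r → ℤ)) ∈ (⋃ i : ℕ, ZeMi M x i) ∧
    ∀ p ∈ (⋃ i : ℕ, ZeMi M x i), ∀ q ∈ (⋃ i : ℕ, ZeMi M x i),
      p + q ∈ (⋃ i : ℕ, ZeMi M x i) :=
  statement5_general M x hx hcone
end
end

section
/- The group automorphism α of ℤ^n = ℤ ⊕ ℤ^r defined by e ↦ e and x_j ↦ x_j − e (j = 1,…,r) restricts for each i ∈ ℤ₊ to a monoid isomorphism α_i : M_i → M_{i+1}, and the induced monoid isomorphisms 1 + α_i : ℤ₊e + M_i → ℤ₊e + M_{i+1} (acting as identity on the ℤ₊e-summand and as α_i on M_i) commute with the inclusions ℤ₊e + M_i ⊆ ℤ₊e + M_{i+1}, i.e., (1 + α_{i+1}) ∘ incl = incl ∘ (1 + α_i). -/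
/-!
Write `c` for the sum of coordinates with respect to the basis `x`. The subgroup
`ℤ(x₁ - ie) + ⋯ + ℤ(x_r - ie)` is the graph `{(-i c(v), v)}` of `-i c`, so `M_i` is the image of
`{v | v ∈ ℝ₊M}` under `v ↦ (-i c(v), v)`, and `α(t, v) = (t - c(v), v)` carries the `i`-th graph
onto the `(i+1)`-th. Since `ℝ₊M` lies in the cone spanned by the `x_j`, `c ≥ 0` on it, and
`(-i c(v), v) = c(v) e + (-(i+1) c(v), v)` gives `ℤ₊e + M_i ⊆ ℤ₊e + M_{i+1}`.
-/
open scoped NNReal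
noncomputable section

namespace Module.Basis

variable {ι R N : Type*} [Fintype ι]

section

variable [CommSemiring R] [AddCommMonoid N] [Module R N]

def coordSum (b : Basis ι R N) : N →ₗ[R] R := ∑ j, b.coord j

@[simp]
lemma coordSum_self (b : Basis ι R N) (j : ι) : b.coordSum (b j) = 1 := by
  classical
  simp [coordSum, Finsupp.single_apply]

end

variable [AddCommGroup N] (b : Basis ι ℤ N)

def tilt (k : ℤ) : N →ₗ[ℤ] ℤ × N :=
  LinearMap.prod (-k • b.coordSum) LinearMap.id

@[simp]
lemma tilt_apply (k : ℤ) (v : N) : b.tilt k v = (-(k * b.coordSum v), v) := by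
  simp [tilt]

lemma closure_range_eq_range_tilt (k : ℤ) :
    AddSubgroup.closure (Set.range fun j => ((-k, b j) : ℤ × N)) =
      (b.tilt k).range.toAddSubgroup := by
  have hrange : (Set.range fun j => ((-k, b j) : ℤ × N)) = b.tilt k '' Set.range b := by
    rw [← Set.range_comp]; ext; simp
  rw [hrange, ← Submodule.span_int_eq_addSubgroupClosure, Submodule.span_image, b.span_eq,
    Submodule.map_top]

lemma tilt_eq_smul_add (k : ℤ) (v : N) :
    b.tilt k v = b.coordSum v • ((1, 0) : ℤ × N) + b.tilt (k + 1) v := by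
  ext <;> simp; ring

lemma apply_eq_sub_coordSum (α : ℤ × N ≃+ ℤ × N) (he : α (1, 0) = (1, 0))
    (hb : ∀ j, α (0, b j) = (0, b j) - (1, 0)) (p : ℤ × N) :
    α p = (p.1 - b.coordSum p.2, p.2) := by
  let g : ℤ × N →ₗ[ℤ] ℤ × N :=
    LinearMap.prod (LinearMap.fst ℤ ℤ N - b.coordSum ∘ₗ LinearMap.snd ℤ ℤ N) (LinearMap.snd ℤ ℤ N)
  suffices h : α.toAddMonoidHom.toIntLinearMap = g from congrArg (· p) h
  refine LinearMap.prod_ext (LinearMap.ext_ring ?_) (b.ext fun j => ?_)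
  · simpa [g] using he
  · simpa [g] using hb j

lemma comp_tilt (α : ℤ × N ≃+ ℤ × N) (he : α (1, 0) = (1, 0))
    (hb : ∀ j, α (0, b j) = (0, b j) - (1, 0)) (k : ℤ) : ⇑α ∘ b.tilt k = b.tilt (k + 1) := by
  ext v <;> simp [b.apply_eq_sub_coordSum α he hb]; ring

end Module.Basis

def realExtension {r : ℕ} (f : (Fin r → ℤ) →ₗ[ℤ] ℤ) : (Fin r → ℝ) →ₗ[ℝ] ℝ :=
  ∑ k, (f (Pi.single k 1) : ℝ) • LinearMap.proj k

lemma realExtension_toR {r : ℕ} (f : (Fin r → ℤ) →ₗ[ℤ] ℤ) (v : Fin r → ℤ) :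
    realExtension f (toR v) = f v := by
  have hsingle (k : Fin r) : (fun j => if k = j then (1 : ℤ) else 0) = Pi.single k 1 := by
    ext j; simp [Pi.single_apply, eq_comm]
  rw [f.pi_apply_eq_sum_univ v]
  simp [realExtension, toR, hsingle, mul_comm]

lemma coordSum_nonneg_of_toR_mem_span {r : ℕ} (b : Module.Basis (Fin r) ℤ (Fin r → ℤ))
    {v : Fin r → ℤ} (hv : toR v ∈ Submodule.span ℝ≥0 (Set.range fun j => toR (b j))) :
    0 ≤ b.coordSum v := by
  obtain ⟨c, hc⟩ := (Submodule.mem_span_range_iff_exists_fun _).mp hv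
  have h := congrArg (realExtension b.coordSum) hc
  simp only [map_sum, NNReal.smul_def, map_smul, realExtension_toR, b.coordSum_self,
    Int.cast_one, smul_eq_mul, mul_one] at h
  have hreal : (0 : ℝ) ≤ b.coordSum v := h ▸ Finset.sum_nonneg fun j _ => (c j).2
  exact_mod_cast hreal

section Mi

variable {r : ℕ} (M : AddSubmonoid (Fin r → ℤ)) (b : Module.Basis (Fin r) ℤ (Fin r → ℤ))

lemma Mi_eq_image_tilt (i : ℕ) : Mi M b i = b.tilt i '' {v | toR v ∈ coneM M} := by
  ext p
  simp only [Mi, b.closure_range_eq_range_tilt, Set.mem_image]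
  constructor
  · rintro ⟨⟨v, rfl⟩, hv⟩
    exact ⟨v, hv, rfl⟩
  · rintro ⟨v, hv, rfl⟩
    exact ⟨⟨v, rfl⟩, hv⟩

lemma image_ZeMi {x : Fin r → Fin r → ℤ} (α : (ℤ × (Fin r → ℤ)) ≃+ (ℤ × (Fin r → ℤ)))
    (he : α (eVec r) = eVec r) {i j : ℕ} (h : α '' Mi M x i = Mi M x j) :
    α '' ZeMi M x i = ZeMi M x j := by
  ext q
  constructor
  · rintro ⟨_, ⟨z, m, hm, rfl⟩, rfl⟩
    exact ⟨z, α m, h ▸ Set.mem_image_of_mem α hm, by rw [map_add, map_zsmul, he]⟩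
  · rintro ⟨z, _, hm, rfl⟩
    rw [← h] at hm
    obtain ⟨m, hm, rfl⟩ := hm
    exact ⟨(z : ℤ) • eVec r + m, ⟨z, m, hm, rfl⟩, by rw [map_add, map_zsmul, he]⟩

lemma ZeMi_subset_succ
    (hcone : coneM M ⊆ (Submodule.span ℝ≥0 (Set.range fun j => toR (b j)) : Set (Fin r → ℝ)))
    (i : ℕ) : ZeMi M b i ⊆ ZeMi M b (i + 1) := by
  rintro _ ⟨z, _, hm, rfl⟩
  rw [Mi_eq_image_tilt] at hm
  obtain ⟨v, hv, rfl⟩ := hm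
  have hc := coordSum_nonneg_of_toR_mem_span b (hcone hv)
  refine ⟨z + (b.coordSum v).toNat, b.tilt (i + 1) v, ?_, ?_⟩
  · rw [Mi_eq_image_tilt, Nat.cast_succ]
    exact Set.mem_image_of_mem _ hv
  rw [b.tilt_eq_smul_add]
  push_cast [Int.toNat_of_nonneg hc]
  rw [add_smul, add_assoc]
  rfl

end Mi

theorem statement6_general {r : ℕ} (M : AddSubmonoid (Fin r → ℤ))
    (x : Fin r → (Fin r → ℤ)) (hx : ∃ b : Module.Basis (Fin r) ℤ (Fin r → ℤ), x = ⇑b)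
    (hcone : coneM M ⊆
      (Submodule.span ℝ≥0 (Set.range fun j => toR (x j)) : Set (Fin r → ℝ)))
    (α : (ℤ × (Fin r → ℤ)) ≃+ (ℤ × (Fin r → ℤ)))
    (hαe : α (eVec r) = eVec r)
    (hαx : ∀ j : Fin r, α ((0 : ℤ), x j) = ((0 : ℤ), x j) - eVec r) :
    ∀ i : ℕ,
      Set.BijOn α (Mi M x i) (Mi M x (i + 1)) ∧
      Set.BijOn α (ZeMi M x i) (ZeMi M x (i + 1)) ∧
      -- `α` restricted to `ℤ₊e + M_i` is `1 + α_i` (identity on `ℤ₊e`, `α_i` on `M_i`):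
      (∀ (z : ℕ) (m : ℤ × (Fin r → ℤ)), m ∈ Mi M x i →
        α ((z : ℤ) • eVec r + m) = (z : ℤ) • eVec r + α m) ∧
      -- and the square `(1 + α_{i+1}) ∘ incl = incl ∘ (1 + α_i)` commutes:
      (ZeMi M x i ⊆ ZeMi M x (i + 1)) ∧
      (∀ p ∈ ZeMi M x i, α p ∈ ZeMi M x (i + 2)) := by
  obtain ⟨b, rfl⟩ := hx
  intro i
  have hMi : α '' Mi M b i = Mi M b (i + 1) := by
    rw [Mi_eq_image_tilt, Mi_eq_image_tilt, ← Set.image_comp, b.comp_tilt α hαe hαx, Nat.cast_succ]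
  have hZeMi : α '' ZeMi M b i = ZeMi M b (i + 1) := image_ZeMi M α hαe hMi
  have hsub := ZeMi_subset_succ M b hcone
  exact ⟨hMi ▸ α.injective.injOn.bijOn_image, hZeMi ▸ α.injective.injOn.bijOn_image,
    fun z m _ => by rw [map_add, map_zsmul, hαe],
    hsub i, fun p hp => hsub (i + 1) (hZeMi ▸ Set.mem_image_of_mem α hp)⟩

/-- the automorphism α of ℤ ⊕ ℤ^r with α(e) = e, α(x_j) = x_j - e restricts
to monoid isomorphisms α_i : M_i → M_{i+1}; the induced isomorphisms
1 + α_i : ℤ₊e + M_i → ℤ₊e + M_{i+1} (identity on ℤ₊e, α_i on M_i) commute with the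
inclusions ℤ₊e + M_i ⊆ ℤ₊e + M_{i+1}. -/
theorem statement6 {r : ℕ} (M : AddSubmonoid (Fin r → ℤ))
    (hFG : M.FG) (hpos : IsPositiveMonoid M) (hnorm : IsNormalMonoid M) (hgp : gp M = ⊤)
    (x : Fin r → (Fin r → ℤ)) (hx : ∃ b : Module.Basis (Fin r) ℤ (Fin r → ℤ), x = ⇑b)
    (hcone : coneM M ⊆
      (Submodule.span ℝ≥0 (Set.range fun j => toR (x j)) : Set (Fin r → ℝ)))
    (α : (ℤ × (Fin r → ℤ)) ≃+ (ℤ × (Fin r → ℤ)))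
    (hαe : α (eVec r) = eVec r)
    (hαx : ∀ j : Fin r, α ((0 : ℤ), x j) = ((0 : ℤ), x j) - eVec r) :
    ∀ i : ℕ,
      Set.BijOn α (Mi M x i) (Mi M x (i + 1)) ∧
      Set.BijOn α (ZeMi M x i) (ZeMi M x (i + 1)) ∧
      -- `α` restricted to `ℤ₊e + M_i` is `1 + α_i` (identity on `ℤ₊e`, `α_i` on `M_i`):
      (∀ (z : ℕ) (m : ℤ × (Fin r → ℤ)), m ∈ Mi M x i →
        α ((z : ℤ) • eVec r + m) = (z : ℤ) • eVec r + α m) ∧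
      -- and the square `(1 + α_{i+1}) ∘ incl = incl ∘ (1 + α_i)` commutes:
      (ZeMi M x i ⊆ ZeMi M x (i + 1)) ∧
      (∀ p ∈ ZeMi M x i, α p ∈ ZeMi M x (i + 2)) :=
  statement6_general M x hx hcone α hαe hαx
end
end

section
/- Each monoid M_i (i ∈ ℤ₊) is a positive normal affine monoid, isomorphic as a monoid to M = M₀. -/
open scoped NNReal
noncomputable section

/-!
The lattice `ℤ(x₁ - ie) + ⋯ + ℤ(x_r - ie)` is the image of `ℤ^r` under the injective homomorphism
`v ↦ (-i·σ(v), v)`, where `σ` sums the coordinates in the basis `x`, and the projection to `ℤ^r`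
inverts it. The cone condition defining `M_i` only sees this second coordinate, and an integral
point of `ℝ₊M` already lies in `M`: by the conic Carathéodory theorem it is a nonnegative
combination of linearly independent elements of `M`, such coefficients are forced to be rational,
so a positive multiple of the point lies in `M`, and normality applies. Thus `M_i` is the
isomorphic image of `M`, and finite generation, positivity and normality transfer along the
embedding.
-/

section ConicCaratheodory

variable {𝕜 E ι : Type*} [Field 𝕜] [LinearOrder 𝕜] [IsStrictOrderedRing 𝕜]
  [AddCommGroup E] [Module 𝕜 E] [Fintype ι]

theorem exists_relation_pos_of_not_linearIndepOn {w : ι → E} {s : Set ι}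
    (hdep : ¬ LinearIndepOn 𝕜 w s) :
    ∃ c : ι → 𝕜, Function.support c ⊆ s ∧ ∑ k, c k • w k = 0 ∧ ∃ k, 0 < c k := by
  obtain ⟨f, hfs, hf0, hf⟩ := linearDepOn_iff'.mp hdep
  rw [Finsupp.linearCombination_apply, Finsupp.sum_fintype _ _ (by simp)] at hf0
  obtain ⟨k, hk⟩ := Finsupp.ne_iff.mp hf
  rcases lt_or_gt_of_ne hk with hneg | hpos
  · refine ⟨-f, fun j hj => hfs (by simpa using hj), by simp [hf0], k, by simpa using hneg⟩
  · exact ⟨f, fun j hj => hfs (by simpa using hj), hf0, k, hpos⟩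

theorem exists_nonneg_sum_smul_eq_of_not_linearIndepOn {w : ι → E} {a : ι → 𝕜} (ha : 0 ≤ a)
    (hdep : ¬ LinearIndepOn 𝕜 w (Function.support a)) :
    ∃ b : ι → 𝕜, 0 ≤ b ∧ ∑ k, b k • w k = ∑ k, a k • w k ∧
      Function.support b ⊂ Function.support a := by
  classical
  obtain ⟨c, hcs, hc0, hpos⟩ := exists_relation_pos_of_not_linearIndepOn hdep
  -- Move along `-c` until the first coefficient (at `k₀`) hits zero.
  obtain ⟨k₀, hk₀, hmin⟩ := (Finset.univ.filter fun k => 0 < c k).exists_min_image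
    (fun k => a k / c k) (by simpa [Finset.Nonempty] using hpos)
  replace hk₀ : 0 < c k₀ := (Finset.mem_filter.mp hk₀).2
  set τ := a k₀ / c k₀
  have hτ : 0 ≤ τ := div_nonneg (ha k₀) hk₀.le
  refine ⟨a - τ • c, fun k => ?_, ?_, ?_⟩
  · rcases le_or_gt (c k) 0 with hck | hck
    · simp only [Pi.sub_apply, Pi.smul_apply, smul_eq_mul, Pi.zero_apply]
      have hak : 0 ≤ a k := ha k
      linarith [mul_nonpos_of_nonneg_of_nonpos hτ hck]
    · have := hmin k (by simpa using hck)
      rw [le_div_iff₀ hck] at this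
      simpa using this
  · simp [sub_smul, Finset.sum_sub_distrib, mul_smul, ← Finset.smul_sum, hc0]
  · have hk₀a : k₀ ∈ Function.support a := hcs hk₀.ne'
    refine (Set.ssubset_iff_of_subset fun k hk => ?_).mpr ⟨k₀, hk₀a, ?_⟩
    · by_contra hak
      have hck : c k = 0 := Function.notMem_support.mp fun h => hak (hcs h)
      simp [Function.notMem_support.mp hak, hck] at hk
    · simp [τ, hk₀.ne']

theorem exists_nonneg_sum_smul_eq_linearIndepOn (w : ι → E) {a : ι → 𝕜} (ha : 0 ≤ a) :
    ∃ b : ι → 𝕜, 0 ≤ b ∧ ∑ k, b k • w k = ∑ k, a k • w k ∧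
      LinearIndepOn 𝕜 w (Function.support b) := by
  induction hn : (Function.support a).ncard using Nat.strong_induction_on generalizing a with
  | _ n ih =>
  by_cases hli : LinearIndepOn 𝕜 w (Function.support a)
  · exact ⟨a, ha, rfl, hli⟩
  obtain ⟨b, hb, hsum, hlt⟩ := exists_nonneg_sum_smul_eq_of_not_linearIndepOn ha hli
  obtain ⟨b', hb', hsum', hli'⟩ := ih _ (hn ▸ Set.ncard_lt_ncard hlt) hb rfl
  exact ⟨b', hb', hsum'.trans hsum, hli'⟩

end ConicCaratheodory

theorem exists_algebraMap_eq_of_sum_smul_eq {K L ι ι' : Type*} [Field K] [Field L] [Algebra K L]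
    [Fintype ι] [Finite ι'] {u : ι → ι' → K} (hu : LinearIndependent K u) {v : ι' → K}
    {a : ι → L} (h : ∑ k, a k • (algebraMap K L ∘ u k) = algebraMap K L ∘ v) :
    ∃ μ : ι → K, ∀ k, algebraMap K L (μ k) = a k := by
  have hv : v ∈ Submodule.span K (Set.range u) := by
    by_contra hv
    have hvu : LinearIndependent L fun o => algebraMap K L ∘ Option.casesOn' o v u :=
      linearIndependent_algebraMap_comp_iff.mpr (hu.option hv)
    have := Fintype.linearIndependent_iff.mp hvu (fun o => o.elim (-1) a)
      (by simp [Fintype.sum_option, h]) none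
    simp at this
  obtain ⟨μ, hμ⟩ := (Submodule.mem_span_range_iff_exists_fun K).mp hv
  have huL : LinearIndependent L fun k => algebraMap K L ∘ u k :=
    linearIndependent_algebraMap_comp_iff.mpr hu
  refine ⟨μ, fun k => sub_eq_zero.mp (Fintype.linearIndependent_iff.mp huL
    (fun k => algebraMap K L (μ k) - a k) ?_ k)⟩
  simp only [sub_smul, Finset.sum_sub_distrib, h, ← hμ, sub_eq_zero]
  ext i
  simp [Finset.sum_apply, Algebra.smul_def]

theorem exists_rat_nonneg_sum_smul_eq {ι ι' : Type*} [Fintype ι] [Finite ι'] (w : ι → ι' → ℚ)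
    (v : ι' → ℚ) {a : ι → ℝ} (ha : 0 ≤ a)
    (h : ∑ k, a k • (Rat.cast ∘ w k : ι' → ℝ) = Rat.cast ∘ v) :
    ∃ q : ι → ℚ, 0 ≤ q ∧ ∑ k, q k • w k = v := by
  classical
  obtain ⟨b, hb, hsum, hli⟩ :=
    exists_nonneg_sum_smul_eq_linearIndepOn (fun k => (Rat.cast ∘ w k : ι' → ℝ)) ha
  rw [h] at hsum
  set s := Function.support b
  have hliQ : LinearIndependent ℚ fun k : s => w k :=
    linearIndependent_algebraMap_comp_iff (S := ℝ) |>.mp hli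
  obtain ⟨μ, hμ⟩ := exists_algebraMap_eq_of_sum_smul_eq hliQ (v := v) (a := fun k : s => b k) (by
    rw [Finset.sum_set_coe (f := fun k => b k • (algebraMap ℚ ℝ ∘ w k))]
    refine (Finset.sum_subset (Finset.subset_univ _) fun k _ hk => ?_).trans hsum
    simp only [Set.mem_toFinset, Function.mem_support, not_not, s] at hk
    simp [hk])
  set q : ι → ℚ := fun k => if hk : k ∈ s then μ ⟨k, hk⟩ else 0
  have hq : ∀ k, (q k : ℝ) = b k := fun k => by
    by_cases hk : k ∈ s
    · simpa [q, hk] using hμ ⟨k, hk⟩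
    · simp [q, hk, Function.notMem_support.mp hk]
  refine ⟨q, fun k => Rat.cast_nonneg.mp (by rw [hq]; exact hb k),
    funext fun i => Rat.cast_injective (α := ℝ) ?_⟩
  simpa [Finset.sum_apply, hq] using congrFun hsum i

theorem exists_pos_nat_mul_eq_nat {ι : Type*} [Fintype ι] {q : ι → ℚ} (hq : 0 ≤ q) :
    ∃ c : ℕ, 0 < c ∧ ∀ k, ∃ n : ℕ, (c : ℚ) * q k = n := by
  refine ⟨∏ k, (q k).den, Finset.prod_pos fun k _ => (q k).den_pos, fun k => ?_⟩
  obtain ⟨e, he⟩ := Finset.dvd_prod_of_mem (fun k => (q k).den) (Finset.mem_univ k)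
  obtain ⟨m, hm⟩ := Int.eq_ofNat_of_zero_le (Rat.num_nonneg.mpr (hq k))
  refine ⟨e * m, ?_⟩
  rw [he, Nat.cast_mul, mul_comm, ← mul_assoc, Rat.mul_den_eq_num, hm]
  push_cast
  ring

theorem exists_nsmul_eq_sum_nsmul_of_sum_smul_eq {ι ι' : Type*} [Fintype ι] [Finite ι']
    (w : ι → ι' → ℤ) (v : ι' → ℤ) {a : ι → ℝ} (ha : 0 ≤ a)
    (h : ∑ k, a k • (Int.cast ∘ w k : ι' → ℝ) = Int.cast ∘ v) :
    ∃ (c : ℕ) (n : ι → ℕ), 0 < c ∧ c • v = ∑ k, n k • w k := by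
  obtain ⟨q, hq, hqsum⟩ := exists_rat_nonneg_sum_smul_eq (fun k => Int.cast ∘ w k)
    (Int.cast ∘ v) ha (by simpa [Function.comp_def] using h)
  obtain ⟨c, hc, hn⟩ := exists_pos_nat_mul_eq_nat hq
  choose n hn using hn
  refine ⟨c, n, hc, funext fun i => Int.cast_injective (α := ℚ) ?_⟩
  have := congrFun hqsum i
  simp only [Finset.sum_apply, Pi.smul_apply, Function.comp_apply, smul_eq_mul] at this
  simp [Finset.sum_apply, ← this, Finset.mul_sum, ← hn, mul_assoc]

section Monoids

variable {G H : Type*} [AddCommGroup G] [AddCommGroup H] {M : AddSubmonoid G} {f : G →+ H}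

theorem IsPositiveMonoid.map (hM : IsPositiveMonoid M) (hf : Function.Injective f) :
    IsPositiveMonoid (M.map f) := by
  rintro _ ⟨x, hx, rfl⟩ ⟨y, hy, hxy⟩
  have hyx : y = -x := hf (by simpa using hxy)
  rw [hM x hx (hyx ▸ hy), map_zero]

theorem IsNormalMonoid.map (hM : IsNormalMonoid M) (hf : Function.Injective f) :
    IsNormalMonoid (M.map f) := by
  intro c y hc hy hcy
  rw [gp, AddSubmonoid.coe_map, ← AddMonoidHom.map_closure] at hy
  obtain ⟨x, hx, rfl⟩ := hy
  obtain ⟨x', hx', hxx'⟩ := hcy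
  rw [← map_zsmul] at hxx'
  exact ⟨x, hM c x hc hx (hf hxx' ▸ hx'), rfl⟩

end Monoids

theorem mem_of_toR_mem_coneM {r : ℕ} {M : AddSubmonoid (Fin r → ℤ)} (hnorm : IsNormalMonoid M)
    (hgp : gp M = ⊤) {v : Fin r → ℤ} (h : toR v ∈ coneM M) : v ∈ M := by
  rw [coneM, SetLike.mem_coe, Submodule.mem_span_set'] at h
  obtain ⟨n, f, g, hsum⟩ := h
  choose m hmM hmg using fun k => (g k).2
  obtain ⟨c, ν, hc, hcv⟩ := exists_nsmul_eq_sum_nsmul_of_sum_smul_eq m v (a := fun k => f k)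
    (fun k => (f k).2) (by simp only [← hmg, NNReal.smul_def] at hsum; exact hsum)
  refine hnorm c v hc (hgp ▸ AddSubgroup.mem_top v) ?_
  rw [natCast_zsmul, hcv]
  exact sum_mem fun k _ => nsmul_mem (hmM k) _

section BasisLift

variable {ι E : Type*} [Fintype ι] [AddCommGroup E]

def basisLift (b : Module.Basis ι ℤ E) (t : ℤ) : E →+ ℤ × E :=
  (t • ∑ j, b.coord j).toAddMonoidHom.prod (AddMonoidHom.id E)

theorem basisLift_apply_basis (b : Module.Basis ι ℤ E) (t : ℤ) (j : ι) :
    basisLift b t (b j) = (t, b j) := by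
  simp [basisLift]

theorem basisLift_injective (b : Module.Basis ι ℤ E) (t : ℤ) :
    Function.Injective (basisLift b t) :=
  fun _ _ h => congrArg Prod.snd h

theorem closure_range_eq_range_basisLift (b : Module.Basis ι ℤ E) (t : ℤ) :
    AddSubgroup.closure (Set.range fun j => (t, b j)) = (basisLift b t).range := by
  have : Set.range (fun j => (t, b j)) = basisLift b t '' Set.range b := by
    rw [← Set.range_comp]
    exact congrArg Set.range (funext fun j => (basisLift_apply_basis b t j).symm)
  rw [this, ← AddMonoidHom.map_closure, ← Submodule.span_int_eq_addSubgroupClosure, b.span_eq,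
    Submodule.top_toAddSubgroup, AddMonoidHom.range_eq_map]

theorem bijOn_snd_image_basisLift (b : Module.Basis ι ℤ E) (t : ℤ) (s : Set E) :
    Set.BijOn Prod.snd (basisLift b t '' s) s := by
  refine ⟨?_, ?_, fun v hv => ⟨basisLift b t v, ⟨v, hv, rfl⟩, rfl⟩⟩
  · rintro _ ⟨v, hv, rfl⟩
    exact hv
  · rintro _ ⟨u, -, rfl⟩ _ ⟨v, -, rfl⟩ h
    exact congrArg _ h

end BasisLift

theorem Mi_eq_map_basisLift {r : ℕ} {M : AddSubmonoid (Fin r → ℤ)} (hnorm : IsNormalMonoid M)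
    (hgp : gp M = ⊤) (b : Module.Basis (Fin r) ℤ (Fin r → ℤ)) (i : ℕ) :
    Mi M b i = M.map (basisLift b (-(i : ℤ))) := by
  ext p
  simp only [Mi, closure_range_eq_range_basisLift, Set.mem_ofPred_eq, AddMonoidHom.mem_range,
    AddSubmonoid.coe_map, Set.mem_image, SetLike.mem_coe]
  constructor
  · rintro ⟨⟨v, rfl⟩, hv⟩
    exact ⟨v, mem_of_toR_mem_coneM hnorm hgp hv, rfl⟩
  · rintro ⟨v, hv, rfl⟩
    exact ⟨⟨v, rfl⟩, Submodule.subset_span ⟨v, hv, rfl⟩⟩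

theorem statement7_general {r : ℕ} (M : AddSubmonoid (Fin r → ℤ))
    (hFG : M.FG) (hpos : IsPositiveMonoid M) (hnorm : IsNormalMonoid M) (hgp : gp M = ⊤)
    (x : Fin r → (Fin r → ℤ)) (hx : ∃ b : Module.Basis (Fin r) ℤ (Fin r → ℤ), x = ⇑b) :
    ∀ i : ℕ,
      (∃ S : Finset (ℤ × (Fin r → ℤ)), (S : Set (ℤ × (Fin r → ℤ))) ⊆ Mi M x i ∧
        Mi M x i = (AddSubmonoid.closure (S : Set (ℤ × (Fin r → ℤ))) : Set (ℤ × (Fin r → ℤ)))) ∧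
      (∀ p ∈ Mi M x i, -p ∈ Mi M x i → p = 0) ∧
      (∀ (c : ℕ) (p : ℤ × (Fin r → ℤ)), 0 < c → p ∈ AddSubgroup.closure (Mi M x i) →
        (c : ℤ) • p ∈ Mi M x i → p ∈ Mi M x i) ∧
      (∃ f : (ℤ × (Fin r → ℤ)) → (Fin r → ℤ),
        Set.BijOn f (Mi M x i) (M : Set (Fin r → ℤ)) ∧
        (∀ p ∈ Mi M x i, ∀ q ∈ Mi M x i, f (p + q) = f p + f q) ∧ f 0 = 0) := by
  obtain ⟨b, rfl⟩ := hx
  intro i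
  have hinj := basisLift_injective b (-(i : ℤ))
  obtain ⟨S, hS⟩ := hFG.map (basisLift b (-(i : ℤ)))
  rw [Mi_eq_map_basisLift hnorm hgp b i]
  exact ⟨⟨S, hS ▸ AddSubmonoid.subset_closure, by rw [hS]⟩, hpos.map hinj, hnorm.map hinj,
    Prod.snd, bijOn_snd_image_basisLift b _ M, fun _ _ _ _ => rfl, rfl⟩

/-- each M_i is a positive normal affine monoid, isomorphic as a monoid
to M = M₀. -/
theorem statement7 {r : ℕ} (M : AddSubmonoid (Fin r → ℤ))
    (hFG : M.FG) (hpos : IsPositiveMonoid M) (hnorm : IsNormalMonoid M) (hgp : gp M = ⊤)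
    (x : Fin r → (Fin r → ℤ)) (hx : ∃ b : Module.Basis (Fin r) ℤ (Fin r → ℤ), x = ⇑b)
    (hcone : coneM M ⊆
      (Submodule.span ℝ≥0 (Set.range fun j => toR (x j)) : Set (Fin r → ℝ))) :
    ∀ i : ℕ,
      (∃ S : Finset (ℤ × (Fin r → ℤ)), (S : Set (ℤ × (Fin r → ℤ))) ⊆ Mi M x i ∧
        Mi M x i = (AddSubmonoid.closure (S : Set (ℤ × (Fin r → ℤ))) : Set (ℤ × (Fin r → ℤ)))) ∧
      (∀ p ∈ Mi M x i, -p ∈ Mi M x i → p = 0) ∧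
      (∀ (c : ℕ) (p : ℤ × (Fin r → ℤ)), 0 < c → p ∈ AddSubgroup.closure (Mi M x i) →
        (c : ℤ) • p ∈ Mi M x i → p ∈ Mi M x i) ∧
      (∃ f : (ℤ × (Fin r → ℤ)) → (Fin r → ℤ),
        Set.BijOn f (Mi M x i) (M : Set (Fin r → ℤ)) ∧
        (∀ p ∈ Mi M x i, ∀ q ∈ Mi M x i, f (p + q) = f p + f q) ∧ f 0 = 0) :=
  statement7_general M hFG hpos hnorm hgp x hx
end
end

section
/- Given a positive normal affine monoid M of rank r with gp(M) = ℤ^r (identified inside ℤ^n = ℤ ⊕ ℤ^r, e = (1,0), and M₁ defined as above), there exist affine normal submonoids N₊ ⊆ ℤ₊e + M and N₋ ⊆ ℤ₋e + M₁ of ℤ^n such that: (i) e ∈ N₊ and −e ∈ N₋; (ii) N₋ ∩ M₁ = {0}; (iii) ℤe + N₊ = ℤe + N₋ = ℤe + M. -/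
open scoped NNReal
noncomputable section

/-! Let `σ` be the sum of the coordinates in the basis `x`. As `ℝ₊M` lies in the positive orthant
of `x`, the `x`-coordinates of every `m ∈ M` are nonnegative, so `σ ≥ 0` on `M` and `σ m = 0` only
for `m = 0`; moreover `M₁` is the graph `{(-σ m, m)}`. Take `N₊ = ℤ₊ × M` and
`N₋ = {(z, m) | m ∈ M, z ≤ -2σ m}`, the preimage of `N₊` under the automorphism
`(z, m) ↦ (-z - 2σ m, m)` of `ℤ ⊕ ℤ^r`, so that finite generation and normality pass from `N₊` to
`N₋`. A point of `N₋ ∩ M₁` has `-σ m ≤ -2σ m`, forcing `σ m = 0`. -/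

section Normality

variable {G H : Type*} [AddCommGroup G] [AddCommGroup H]

lemma gp_prod_le (N : AddSubmonoid G) (M : AddSubmonoid H) :
    gp (N.prod M) ≤ (gp N).prod (gp M) :=
  (AddSubgroup.closure_le _).2 fun _ hp =>
    ⟨AddSubgroup.subset_closure hp.1, AddSubgroup.subset_closure hp.2⟩

theorem IsNormalMonoid.prod {N : AddSubmonoid G} {M : AddSubmonoid H}
    (hN : IsNormalMonoid N) (hM : IsNormalMonoid M) : IsNormalMonoid (N.prod M) :=
  fun c p hc hp hcp =>
    ⟨hN c p.1 hc (gp_prod_le N M hp).1 hcp.1, hM c p.2 hc (gp_prod_le N M hp).2 hcp.2⟩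

lemma gp_comap_le (f : G →+ H) (N : AddSubmonoid H) : gp (N.comap f) ≤ (gp N).comap f :=
  (AddSubgroup.closure_le _).2 fun _ hp => AddSubgroup.subset_closure hp

theorem IsNormalMonoid.comap {N : AddSubmonoid H} (hN : IsNormalMonoid N) (f : G →+ H) :
    IsNormalMonoid (N.comap f) :=
  fun c p hc hp hcp => hN c (f p) hc (gp_comap_le f N hp) (by simpa using hcp)

end Normality

def nonnegInts : AddSubmonoid ℤ where
  carrier := {z | 0 ≤ z}
  add_mem' := by simp only [Set.mem_ofPred_eq]; exact add_nonneg
  zero_mem' := by simp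

@[simp] lemma mem_nonnegInts {z : ℤ} : z ∈ nonnegInts ↔ 0 ≤ z := by simp [nonnegInts]

lemma nonnegInts_eq_closure_one : nonnegInts = AddSubmonoid.closure {1} := by
  ext z
  rw [AddSubmonoid.mem_closure_singleton, mem_nonnegInts]
  refine ⟨fun hz => ⟨z.toNat, by simpa using hz⟩, ?_⟩
  rintro ⟨n, rfl⟩
  simp

lemma nonnegInts_fg : nonnegInts.FG := ⟨{1}, by simp [nonnegInts_eq_closure_one]⟩

lemma isNormalMonoid_nonnegInts : IsNormalMonoid nonnegInts :=
  fun c _ hc _ hcz =>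
  mem_nonnegInts.2 <| (mul_nonneg_iff_of_pos_left (Int.natCast_pos.2 hc)).1 (by simpa using hcz)

section Shear

variable {G : Type*} [AddCommGroup G]

def reflectShear (f : G →+ ℤ) : ℤ × G ≃+ ℤ × G where
  toFun p := (-p.1 - f p.2, p.2)
  invFun p := (-p.1 - f p.2, p.2)
  left_inv p := by simp
  right_inv p := by simp
  map_add' p q := by ext <;> simp; ring

def lowerMonoid (M : AddSubmonoid G) (f : G →+ ℤ) : AddSubmonoid (ℤ × G) :=
  (nonnegInts.prod M).comap (reflectShear f)

lemma mem_lowerMonoid {M : AddSubmonoid G} {f : G →+ ℤ} {p : ℤ × G} :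
    p ∈ lowerMonoid M f ↔ p.1 + f p.2 ≤ 0 ∧ p.2 ∈ M := by
  simp [lowerMonoid, reflectShear, and_comm, AddSubmonoid.mem_prod]
  omega

lemma AddSubmonoid.FG.lowerMonoid {M : AddSubmonoid G} (hM : M.FG) (f : G →+ ℤ) :
    (lowerMonoid M f).FG := by
  rw [_root_.lowerMonoid, AddSubmonoid.comap_equiv_eq_map_symm (reflectShear f)]
  exact (nonnegInts_fg.prod hM).map (reflectShear f).symm.toAddMonoidHom

lemma IsNormalMonoid.lowerMonoid {M : AddSubmonoid G} (hM : IsNormalMonoid M) (f : G →+ ℤ) :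
    IsNormalMonoid (lowerMonoid M f) :=
  (isNormalMonoid_nonnegInts.prod hM).comap (reflectShear f).toAddMonoidHom

lemma exists_mk_mem_lowerMonoid_iff {M : AddSubmonoid G} {f : G →+ ℤ} {m : G} :
    (∃ a, (a, m) ∈ lowerMonoid M f) ↔ m ∈ M := by
  simp only [mem_lowerMonoid]
  exact ⟨fun ⟨_, ha⟩ => ha.2, fun hm => ⟨-f m, by simp, hm⟩⟩

lemma exists_mk_mem_prod_nonnegInts_iff {M : AddSubmonoid G} {m : G} :
    (∃ a, (a, m) ∈ nonnegInts.prod M) ↔ m ∈ M := by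
  simp only [AddSubmonoid.mem_prod, mem_nonnegInts]
  exact ⟨fun ⟨_, ha⟩ => ha.2, fun hm => ⟨0, le_rfl, hm⟩⟩

end Shear

lemma setOf_zsmul_eVec_add_eq {r : ℕ} {M : AddSubmonoid (Fin r → ℤ)}
    {N : AddSubmonoid (ℤ × (Fin r → ℤ))} (hN : ∀ m, (∃ a, (a, m) ∈ N) ↔ m ∈ M) :
    {p | ∃ (z : ℤ) (q : ℤ × (Fin r → ℤ)), q ∈ N ∧ p = z • eVec r + q} = {p | p.2 ∈ M} := by
  ext p
  simp only [Set.mem_ofPred_eq]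
  constructor
  · rintro ⟨z, q, hq, rfl⟩
    simpa [eVec] using (hN q.2).1 ⟨q.1, hq⟩
  · intro hp
    obtain ⟨a, ha⟩ := (hN p.2).2 hp
    exact ⟨p.1 - a, (a, p.2), ha, by ext <;> simp [eVec]⟩

namespace Module.Basis

variable {ι G : Type*} [AddCommGroup G] (b : Basis ι ℤ G)

lemma mem_closure_range_neg_one_iff (p : ℤ × G) :
    p ∈ AddSubgroup.closure (Set.range fun j => ((-1 : ℤ), b j)) ↔ p.1 = -b.sumCoords p.2 := by
  let g : G →+ ℤ × G := ((-b.sumCoords).toAddMonoidHom).prod (AddMonoidHom.id G)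
  have hrange : (Set.range fun j => ((-1 : ℤ), b j)) = g '' Set.range b := by
    rw [← Set.range_comp]
    ext
    simp [g, sumCoords_self_apply]
  have htop : AddSubgroup.closure (Set.range b) = ⊤ := by
    rw [← Submodule.span_int_eq_addSubgroupClosure, b.span_eq, Submodule.top_toAddSubgroup]
  rw [hrange, ← AddMonoidHom.map_closure, htop, AddSubgroup.mem_map]
  constructor
  · rintro ⟨m, -, rfl⟩
    simp [g]
  · intro hp
    exact ⟨p.2, trivial, Prod.ext (by simp [g, hp]) rfl⟩

lemma sumCoords_nonneg {m : G} (hm : ∀ j, 0 ≤ b.repr m j) : 0 ≤ b.sumCoords m := by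
  rw [coe_sumCoords]
  exact Finset.sum_nonneg fun j _ => hm j

lemma eq_zero_of_sumCoords_eq_zero [Fintype ι] {m : G} (hm : ∀ j, 0 ≤ b.repr m j)
    (h : b.sumCoords m = 0) : m = 0 := by
  simp only [coe_sumCoords] at h
  rw [Finsupp.sum_fintype _ _ fun _ => rfl] at h
  have hrepr : b.repr m = 0 := Finsupp.ext fun j =>
    (Finset.sum_eq_zero_iff_of_nonneg fun j _ => hm j).1 h j (Finset.mem_univ j)
  simpa using hrepr

section Real

variable {r : ℕ} (b : Basis (Fin r) ℤ (Fin r → ℤ))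

def realCoords : (Fin r → ℝ) →ₗ[ℝ] (Fin r → ℝ) :=
  Matrix.toLin' ((LinearMap.toMatrix' b.equivFun.toLinearMap).map (Int.castRingHom ℝ))

lemma realCoords_toR (m : Fin r → ℤ) (j : Fin r) : b.realCoords (toR m) j = b.repr m j := by
  rw [show toR m = Int.castRingHom ℝ ∘ m from rfl]
  have := RingHom.map_mulVec (Int.castRingHom ℝ)
    (LinearMap.toMatrix' b.equivFun.toLinearMap) m j
  simpa [realCoords, Function.comp_def] using this.symm

lemma repr_nonneg_of_toR_mem_span {m : Fin r → ℤ}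
    (hm : toR m ∈ Submodule.span ℝ≥0 (Set.range fun j => toR (b j))) (j : Fin r) :
    0 ≤ b.repr m j := by
  obtain ⟨c, hc⟩ := (Submodule.mem_span_range_iff_exists_fun ℝ≥0).1 hm
  -- the real coordinate map reads off the coefficient `c j` of the nonnegative combination `hc`
  have key := congrFun (congrArg b.realCoords hc) j
  simp only [map_sum, LinearMap.map_smul_of_tower, Finset.sum_apply, Pi.smul_apply,
    realCoords_toR, repr_self, Finsupp.single_apply, Int.cast_ite, Int.cast_one, Int.cast_zero,
    smul_ite, smul_zero, Finset.sum_ite_eq', Finset.mem_univ, if_true] at key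
  have hcoord : (0 : ℝ) ≤ b.repr m j := by
    rw [← key, NNReal.smul_def, smul_eq_mul, mul_one]
    exact (c j).2
  exact_mod_cast hcoord

end Real

end Module.Basis

section LowerMonoid

variable {r : ℕ} {M : AddSubmonoid (Fin r → ℤ)} (b : Module.Basis (Fin r) ℤ (Fin r → ℤ))

lemma mem_Mi_one_iff {p : ℤ × (Fin r → ℤ)} :
    p ∈ Mi M b 1 ↔ p.1 = -b.sumCoords p.2 ∧ toR p.2 ∈ coneM M := by
  simp [Mi, b.mem_closure_range_neg_one_iff]

variable {b}

lemma exists_eq_neg_eVec_add_of_mem_lowerMonoid (hcoord : ∀ m ∈ M, ∀ j, 0 ≤ b.repr m j)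
    {p : ℤ × (Fin r → ℤ)}
    (hp : p ∈ lowerMonoid M (2 • b.sumCoords.toAddMonoidHom)) :
    ∃ (z : ℕ) (m : ℤ × (Fin r → ℤ)), m ∈ Mi M b 1 ∧ p = (-(z : ℤ)) • eVec r + m := by
  obtain ⟨hle, hM⟩ := mem_lowerMonoid.1 hp
  have hσ := b.sumCoords_nonneg (hcoord p.2 hM)
  rw [AddMonoidHom.smul_apply, LinearMap.toAddMonoidHom_coe, two_nsmul] at hle
  refine ⟨(-b.sumCoords p.2 - p.1).toNat, (-b.sumCoords p.2, p.2),
    (mem_Mi_one_iff b).2 ⟨rfl, Submodule.subset_span ⟨p.2, hM, rfl⟩⟩, ?_⟩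
  have hz : ((-b.sumCoords p.2 - p.1).toNat : ℤ) = -b.sumCoords p.2 - p.1 :=
    Int.toNat_of_nonneg (by omega)
  ext
  · simp only [eVec, Prod.fst_add, Prod.smul_fst, smul_eq_mul, mul_one, hz]
    ring
  · simp [eVec]

lemma eq_zero_of_mem_lowerMonoid_of_mem_Mi (hcoord : ∀ m ∈ M, ∀ j, 0 ≤ b.repr m j)
    {p : ℤ × (Fin r → ℤ)}
    (hp : p ∈ lowerMonoid M (2 • b.sumCoords.toAddMonoidHom)) (hMi : p ∈ Mi M b 1) : p = 0 := by
  obtain ⟨hle, hM⟩ := mem_lowerMonoid.1 hp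
  obtain ⟨hfst, -⟩ := (mem_Mi_one_iff b).1 hMi
  have hσ := b.sumCoords_nonneg (hcoord p.2 hM)
  rw [AddMonoidHom.smul_apply, LinearMap.toAddMonoidHom_coe, two_nsmul] at hle
  have hsnd : p.2 = 0 := b.eq_zero_of_sumCoords_eq_zero (hcoord p.2 hM) (by omega)
  ext
  · simp [hfst, hsnd]
  · simp [hsnd]

end LowerMonoid

theorem statement8_general {r : ℕ} (M : AddSubmonoid (Fin r → ℤ))
    (hFG : M.FG) (hnorm : IsNormalMonoid M)
    (x : Fin r → (Fin r → ℤ)) (hx : ∃ b : Module.Basis (Fin r) ℤ (Fin r → ℤ), x = ⇑b)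
    (hcone : coneM M ⊆
      (Submodule.span ℝ≥0 (Set.range fun j => toR (x j)) : Set (Fin r → ℝ))) :
    ∃ Nplus Nminus : AddSubmonoid (ℤ × (Fin r → ℤ)),
      Nplus.FG ∧ Nminus.FG ∧ IsNormalMonoid Nplus ∧ IsNormalMonoid Nminus ∧
      (∀ p ∈ Nplus, 0 ≤ p.1 ∧ p.2 ∈ M) ∧
      (∀ p ∈ Nminus, ∃ (z : ℕ) (m : ℤ × (Fin r → ℤ)), m ∈ Mi M x 1 ∧
        p = (-(z : ℤ)) • eVec r + m) ∧
      eVec r ∈ Nplus ∧ (-eVec r) ∈ Nminus ∧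
      (∀ p ∈ Nminus, p ∈ Mi M x 1 → p = 0) ∧
      {p : ℤ × (Fin r → ℤ) | ∃ (z : ℤ) (q : ℤ × (Fin r → ℤ)), q ∈ Nplus ∧ p = z • eVec r + q}
        = {p : ℤ × (Fin r → ℤ) | p.2 ∈ M} ∧
      {p : ℤ × (Fin r → ℤ) | ∃ (z : ℤ) (q : ℤ × (Fin r → ℤ)), q ∈ Nminus ∧ p = z • eVec r + q}
        = {p : ℤ × (Fin r → ℤ) | p.2 ∈ M} := by
  obtain ⟨b, rfl⟩ := hx
  have hcoord : ∀ m ∈ M, ∀ j, 0 ≤ b.repr m j := fun m hm =>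
    b.repr_nonneg_of_toR_mem_span (hcone (Submodule.subset_span ⟨m, hm, rfl⟩))
  refine ⟨nonnegInts.prod M, lowerMonoid M (2 • b.sumCoords.toAddMonoidHom),
    nonnegInts_fg.prod hFG, hFG.lowerMonoid _, isNormalMonoid_nonnegInts.prod hnorm,
    hnorm.lowerMonoid _, fun _ hp => hp, fun _ => exists_eq_neg_eVec_add_of_mem_lowerMonoid hcoord,
    ⟨by simp [eVec], by simp [eVec]⟩, mem_lowerMonoid.2 ⟨by simp [eVec], by simp [eVec]⟩,
    fun _ => eq_zero_of_mem_lowerMonoid_of_mem_Mi hcoord,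
    setOf_zsmul_eVec_add_eq fun _ => exists_mk_mem_prod_nonnegInts_iff,
    setOf_zsmul_eVec_add_eq fun _ => exists_mk_mem_lowerMonoid_iff⟩

/-- existence of a basic configuration: affine normal submonoids
N₊ ⊆ ℤ₊e + M and N₋ ⊆ ℤ₋e + M₁ with e ∈ N₊, -e ∈ N₋, N₋ ∩ M₁ = {0} and
ℤe + N₊ = ℤe + N₋ = ℤe + M. -/
theorem statement8 {r : ℕ} (M : AddSubmonoid (Fin r → ℤ))
    (hFG : M.FG) (hpos : IsPositiveMonoid M) (hnorm : IsNormalMonoid M) (hgp : gp M = ⊤)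
    (x : Fin r → (Fin r → ℤ)) (hx : ∃ b : Module.Basis (Fin r) ℤ (Fin r → ℤ), x = ⇑b)
    (hcone : coneM M ⊆
      (Submodule.span ℝ≥0 (Set.range fun j => toR (x j)) : Set (Fin r → ℝ))) :
    ∃ Nplus Nminus : AddSubmonoid (ℤ × (Fin r → ℤ)),
      Nplus.FG ∧ Nminus.FG ∧ IsNormalMonoid Nplus ∧ IsNormalMonoid Nminus ∧
      (∀ p ∈ Nplus, 0 ≤ p.1 ∧ p.2 ∈ M) ∧
      (∀ p ∈ Nminus, ∃ (z : ℕ) (m : ℤ × (Fin r → ℤ)), m ∈ Mi M x 1 ∧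
        p = (-(z : ℤ)) • eVec r + m) ∧
      eVec r ∈ Nplus ∧ (-eVec r) ∈ Nminus ∧
      (∀ p ∈ Nminus, p ∈ Mi M x 1 → p = 0) ∧
      {p : ℤ × (Fin r → ℤ) | ∃ (z : ℤ) (q : ℤ × (Fin r → ℤ)), q ∈ Nplus ∧ p = z • eVec r + q}
        = {p : ℤ × (Fin r → ℤ) | p.2 ∈ M} ∧
      {p : ℤ × (Fin r → ℤ) | ∃ (z : ℤ) (q : ℤ × (Fin r → ℤ)), q ∈ Nminus ∧ p = z • eVec r + q}
        = {p : ℤ × (Fin r → ℤ) | p.2 ∈ M} :=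
  statement8_general M hFG hnorm x hx hcone
end
end

section
/- For each integer r ≥ 2, the monoid M_r = ℤ₊(1,1,…,1) + Σ_{j=1}^r ℤ₊(r·e_j) ⊆ ℤ₊^r (where e_j is the j-th standard basis vector of ℤ^r) is a normal affine monoid. -/
/-!
Every generator of `M_r` is nonnegative with pairwise congruent coordinates modulo `r`, and
conversely such a vector, with common residue `a ∈ [0, r)`, is `a·(1,…,1)` plus nonnegative
multiples of the `r·e_j`. So `M_r` is the intersection of the subgroup of vectors with pairwise
congruent coordinates with the nonnegative orthant. Since `gp(M_r)` lies in that subgroup and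
`c x ≥ 0` forces `x ≥ 0`, normality follows.
-/

open scoped NNReal
noncomputable section

/-- The monoid `M_r = ℤ₊(1,…,1) + Σ_j ℤ₊(r·e_j) ⊆ ℤ₊^r`. -/
def Mr (r : ℕ) : AddSubmonoid (Fin r → ℤ) :=
  AddSubmonoid.closure
    ({fun _ => 1} ∪ Set.range fun j : Fin r => (r : ℤ) • Pi.single j (1 : ℤ))

theorem IsNormalMonoid.of_eq_inf {G : Type*} [AddCommGroup G] {M C : AddSubmonoid G}
    (L : AddSubgroup G) (hM : M = L.toAddSubmonoid ⊓ C)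
    (hC : ∀ c : ℕ, 0 < c → ∀ x, (c : ℤ) • x ∈ C → x ∈ C) : IsNormalMonoid M := by
  have hgp : gp M ≤ L := (AddSubgroup.closure_le L).mpr fun x hx => (hM ▸ hx).1
  intro c x hc hx hcx
  rw [hM] at hcx ⊢
  exact ⟨hgp hx, hC c hc x hcx.2⟩

def pairwiseModEq (ι : Type*) (n : ℤ) : AddSubgroup (ι → ℤ) where
  carrier := {x | ∀ i j, x i ≡ x j [ZMOD n]}
  zero_mem' _ _ := rfl
  add_mem' ha hb i j := (ha i j).add (hb i j)
  neg_mem' ha i j := (ha i j).neg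

theorem Mr_le_pairwiseModEq_inf_nonneg (r : ℕ) :
    Mr r ≤ (pairwiseModEq (Fin r) r).toAddSubmonoid ⊓ AddSubmonoid.nonneg _ := by
  refine AddSubmonoid.closure_le.mpr ?_
  rintro _ (rfl | ⟨j, rfl⟩)
  · exact ⟨fun _ _ => rfl, fun _ => zero_le_one⟩
  · refine ⟨fun _ _ => ?_, ?_⟩
    · simp [Int.ModEq]
    · exact smul_nonneg (Int.natCast_nonneg r)
        (Pi.single_nonneg.mpr zero_le_one : (0 : Fin r → ℤ) ≤ Pi.single j 1)

theorem mem_Mr_of_mem_pairwiseModEq {r : ℕ} {x : Fin r → ℤ}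
    (hx : x ∈ pairwiseModEq (Fin r) r) (h0 : 0 ≤ x) : x ∈ Mr r := by
  rcases Nat.eq_zero_or_pos r with rfl | hr
  · exact Subsingleton.elim x 0 ▸ zero_mem _
  -- each coordinate is `a + r * q` with the common residue `a` and a quotient `q ≥ 0`
  set a := x ⟨0, hr⟩ % r
  have ha : 0 ≤ a := Int.emod_nonneg _ (by exact_mod_cast hr.ne')
  have hone : (fun _ => (1 : ℤ)) ∈ Mr r := AddSubmonoid.subset_closure (Or.inl rfl)
  have hgen (j : Fin r) : (r : ℤ) • Pi.single j 1 ∈ Mr r :=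
    AddSubmonoid.subset_closure (Or.inr ⟨j, rfl⟩)
  have hconst : (fun _ => a) ∈ Mr r := by
    have : (fun _ => a) = a.toNat • fun _ : Fin r => (1 : ℤ) := by
      ext; simp [Int.toNat_of_nonneg ha]
    rw [this]
    exact nsmul_mem hone _
  have hsingle (j : Fin r) : (Pi.single j ((r : ℤ) * (x j / r)) : Fin r → ℤ) ∈ Mr r := by
    have hq : 0 ≤ x j / r := Int.ediv_nonneg (h0 j) (Int.natCast_nonneg r)
    have : (Pi.single j ((r : ℤ) * (x j / r)) : Fin r → ℤ) =
        (x j / r).toNat • ((r : ℤ) • Pi.single j 1) := by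
      ext k; by_cases hk : k = j <;> simp [hk, Int.toNat_of_nonneg hq, mul_comm]
    rw [this]
    exact nsmul_mem (hgen j) _
  have hx_eq : x = (fun _ => a) + ∑ j, Pi.single j ((r : ℤ) * (x j / r)) := by
    rw [Finset.univ_sum_single]
    ext k
    exact (hx k ⟨0, hr⟩ ▸ Int.emod_add_mul_ediv (x k) r).symm
  exact hx_eq ▸ add_mem hconst (sum_mem fun j _ => hsingle j)

theorem Mr_eq_pairwiseModEq_inf_nonneg (r : ℕ) :
    Mr r = (pairwiseModEq (Fin r) r).toAddSubmonoid ⊓ AddSubmonoid.nonneg _ :=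
  le_antisymm (Mr_le_pairwiseModEq_inf_nonneg r) fun _ hx =>
    mem_Mr_of_mem_pairwiseModEq hx.1 hx.2

theorem Mr_fg (r : ℕ) : (Mr r).FG :=
  (AddSubmonoid.fg_iff _).mpr ⟨_, rfl, (Set.finite_singleton _).union (Set.finite_range _)⟩

theorem statement10_general (r : ℕ) :
    (Mr r).FG ∧ IsNormalMonoid (Mr r) :=
  ⟨Mr_fg r, .of_eq_inf _ (Mr_eq_pairwiseModEq_inf_nonneg r) fun _ hc _ h =>
    AddSubmonoid.mem_nonneg.mpr <|
      nonneg_of_smul_nonneg_of_pos_left (AddSubmonoid.mem_nonneg.mp h) (Int.natCast_pos.mpr hc)⟩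

/-- for r ≥ 2, `M_r` is a normal affine monoid. -/
theorem statement10 (r : ℕ) (hr : 2 ≤ r) :
    (Mr r).FG ∧ IsNormalMonoid (Mr r) :=
  statement10_general r
end
end

section
/- For each integer r ≥ 2, the monoid M_r = ℤ₊(1,…,1) + Σ_{j=1}^r ℤ₊(r·e_j) ⊆ ℤ₊^r is simplicial (the cone it generates is ℝ₊^r, which is spanned by r linearly independent vectors) and is not a free commutative monoid (not isomorphic to ℤ₊^r). -/
open scoped NNReal
noncomputable section

/-!
`M_r` lies in the orthant `ℤ₊^r` and contains `r e_j` for every `j`, so its cone is `ℝ₊^r`,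
spanned by the basis vectors.

It is not free because it fails Riesz refinement, which `ℕ^m` has (coordinatewise, take
`a = min x z`) and which is invariant under isomorphism. In `M_r` consider
`𝟙 + (r - 1)𝟙 = r e₀ + w` with `w = ∑_{j ≠ 0} r e_j`. If `𝟙 = a + b` and `a + c = r e₀` then
`a ≤ 𝟙`, and since the coordinates of an element of `M_r` are congruent mod `r ≥ 2`, `a` is
`0` or `𝟙`; `a ≤ r e₀` rules out `𝟙`, so `b = 𝟙`, and `b ≤ w` fails at the coordinate `0`.
-/

open Finset

def HasRieszRefinement (M : Type*) [AddCommMonoid M] : Prop :=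
  ∀ x y z w : M, x + y = z + w →
    ∃ a b c d : M, x = a + b ∧ y = c + d ∧ z = a + c ∧ w = b + d

theorem HasRieszRefinement.of_addEquiv {M N : Type*} [AddCommMonoid M] [AddCommMonoid N]
    (e : M ≃+ N) (h : HasRieszRefinement N) : HasRieszRefinement M := by
  intro x y z w hxy
  obtain ⟨a, b, c, d, hx, hy, hz, hw⟩ :=
    h (e x) (e y) (e z) (e w) (by rw [← map_add, ← map_add, hxy])
  refine ⟨e.symm a, e.symm b, e.symm c, e.symm d, ?_, ?_, ?_, ?_⟩ <;>
    apply e.injective <;> simpa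

theorem hasRieszRefinement_pi_nat (ι : Type*) : HasRieszRefinement (ι → ℕ) := by
  intro x y z w hxy
  refine ⟨x ⊓ z, x - x ⊓ z, z - x ⊓ z, y - (z - x ⊓ z), ?_, ?_, ?_, ?_⟩ <;> funext i <;>
    have := congrFun hxy i <;> simp only [Pi.add_apply, Pi.sub_apply, Pi.inf_apply] at this ⊢ <;>
    omega

theorem one_mem_Mr (r : ℕ) : (1 : Fin r → ℤ) ∈ Mr r :=
  AddSubmonoid.subset_closure (Or.inl rfl)

theorem smul_single_mem_Mr {r : ℕ} (j : Fin r) : (r : ℤ) • Pi.single j (1 : ℤ) ∈ Mr r :=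
  AddSubmonoid.subset_closure (Or.inr ⟨j, rfl⟩)

theorem nonneg_of_mem_Mr {r : ℕ} {v : Fin r → ℤ} (hv : v ∈ Mr r) : 0 ≤ v := by
  induction hv using AddSubmonoid.closure_induction with
  | mem v hv =>
    rcases hv with rfl | ⟨j, rfl⟩
    · exact zero_le_one
    · exact smul_nonneg (Int.natCast_nonneg r) (Pi.single_nonneg.2 zero_le_one)
  | zero => exact le_rfl
  | add _ _ _ _ ha hb => exact add_nonneg ha hb

theorem dvd_sub_of_mem_Mr {r : ℕ} {v : Fin r → ℤ} (hv : v ∈ Mr r) (i j : Fin r) :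
    (r : ℤ) ∣ v i - v j := by
  induction hv using AddSubmonoid.closure_induction with
  | mem v hv =>
    rcases hv with rfl | ⟨k, rfl⟩
    · simp
    · simp only [Pi.smul_apply, smul_eq_mul, ← mul_sub]
      exact dvd_mul_right _ _
  | zero => simp
  | add _ _ _ _ ha hb => simpa [add_sub_add_comm] using dvd_add ha hb

theorem Mr.le_of_eq_add {r : ℕ} {x p q : Mr r} (h : x = p + q) :
    (p : Fin r → ℤ) ≤ x := by
  rw [h]
  exact le_add_of_nonneg_right (nonneg_of_mem_Mr q.2)

theorem eq_zero_of_mem_Mr_of_le_one {r : ℕ} (hr : 2 ≤ r) {a : Fin r → ℤ} (ha : a ∈ Mr r)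
    (ha_le : a ≤ 1) {i : Fin r} (hi : a i = 0) : a = 0 := by
  funext j
  have hdvd := dvd_sub_of_mem_Mr ha j i
  rw [hi, sub_zero] at hdvd
  have hlt : a j < r := by have := ha_le j; simp only [Pi.one_apply] at this; omega
  exact Int.eq_zero_of_dvd_of_nonneg_of_lt (nonneg_of_mem_Mr ha j) hlt hdvd

theorem not_hasRieszRefinement_Mr {r : ℕ} (hr : 2 ≤ r) : ¬ HasRieszRefinement (Mr r) := by
  intro h
  let i₀ : Fin r := ⟨0, by omega⟩
  let i₁ : Fin r := ⟨1, by omega⟩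
  let e : Fin r → Fin r → ℤ := fun j => (r : ℤ) • Pi.single j 1
  let w : Fin r → ℤ := ∑ j ∈ univ.erase i₀, e j
  have hw : w ∈ Mr r := sum_mem fun j _ => smul_single_mem_Mr j
  have hw₀ : w i₀ = 0 := by
    simp +contextual [w, e, Finset.sum_apply, Pi.single_apply]
  have hsum : (1 : Fin r → ℤ) + (r - 1) • 1 = e i₀ + w := by
    rw [add_sum_erase univ e (mem_univ i₀), ← smul_sum, univ_sum_single fun _ => (1 : ℤ),
      ← succ_nsmul', Nat.sub_add_cancel (by omega), natCast_zsmul, Pi.one_def]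
  obtain ⟨a, b, c, d, hab, -, hac, hbd⟩ :=
    h ⟨1, one_mem_Mr r⟩ ⟨(r - 1) • 1, nsmul_mem (one_mem_Mr r) _⟩
      ⟨_, smul_single_mem_Mr i₀⟩ ⟨w, hw⟩ (Subtype.ext hsum)
  have ha₁ : (a : Fin r → ℤ) i₁ = 0 := by
    have ha_le := Mr.le_of_eq_add hac i₁
    simp [i₀, i₁, Fin.ext_iff] at ha_le
    exact le_antisymm ha_le (nonneg_of_mem_Mr a.2 i₁)
  have ha : (a : Fin r → ℤ) = 0 :=
    eq_zero_of_mem_Mr_of_le_one hr a.2 (Mr.le_of_eq_add hab) ha₁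
  have hb : (b : Fin r → ℤ) = 1 := by
    simpa [ha] using (congrArg Subtype.val hab).symm
  have hb_le := Mr.le_of_eq_add hbd i₀
  simp [hb, hw₀] at hb_le

theorem span_nnreal_single_one {ι : Type*} [Fintype ι] [DecidableEq ι] :
    (Submodule.span ℝ≥0 (Set.range fun i : ι => Pi.single i (1 : ℝ)) : Set (ι → ℝ)) =
      {y | ∀ i, 0 ≤ y i} := by
  have hsum (c : ι → ℝ≥0) : ∑ i, c i • Pi.single i (1 : ℝ) = fun i => (c i : ℝ) := by
    simp_rw [← Pi.single_smul', NNReal.smul_def, smul_eq_mul, mul_one]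
    exact univ_sum_single fun i => (c i : ℝ)
  ext y
  simp only [SetLike.mem_coe, Submodule.mem_span_range_iff_exists_fun, hsum, Set.mem_ofPred_eq]
  constructor
  · rintro ⟨c, rfl⟩ i
    exact (c i).2
  · intro hy
    exact ⟨fun i => (y i).toNNReal, funext fun i => Real.coe_toNNReal _ (hy i)⟩

theorem toR_smul_single (r : ℕ) (i : Fin r) :
    toR ((r : ℤ) • Pi.single i (1 : ℤ)) = (r : ℝ≥0) • Pi.single i (1 : ℝ) := by
  funext k
  by_cases hk : k = i
  · subst hk; simp [toR, NNReal.smul_def]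
  · simp [toR, hk]

theorem coneM_Mr (r : ℕ) :
    coneM (Mr r) =
      (Submodule.span ℝ≥0 (Set.range fun i : Fin r => Pi.single i (1 : ℝ)) : Set (Fin r → ℝ)) := by
  refine congrArg SetLike.coe (le_antisymm ?_ ?_)
  · rw [Submodule.span_le]
    rintro - ⟨v, hv, rfl⟩
    rw [SetLike.mem_coe, ← SetLike.mem_coe, span_nnreal_single_one]
    exact fun i => Int.cast_nonneg (nonneg_of_mem_Mr hv i)
  · rw [Submodule.span_le]
    rintro - ⟨i, rfl⟩
    have hr : (r : ℝ≥0) ≠ 0 := Nat.cast_ne_zero.2 (Fin.pos i).ne'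
    have hmem :=
      Submodule.subset_span (R := ℝ≥0) (Set.mem_image_of_mem toR (smul_single_mem_Mr i))
    rw [toR_smul_single] at hmem
    simpa [smul_smul, hr] using Submodule.smul_mem _ (r : ℝ≥0)⁻¹ hmem

/-- for r ≥ 2, `M_r` is simplicial (its cone is ℝ₊^r, spanned by r
linearly independent vectors) and is not a free commutative monoid. -/
theorem statement11 (r : ℕ) (hr : 2 ≤ r) :
    coneM (Mr r) = {y : Fin r → ℝ | ∀ i, 0 ≤ y i} ∧
    (∃ v : Fin r → (Fin r → ℝ), LinearIndependent ℝ v ∧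
      coneM (Mr r) = (Submodule.span ℝ≥0 (Set.range v) : Set (Fin r → ℝ))) ∧
    ∀ m : ℕ, ¬ Nonempty ((Mr r) ≃+ (Fin m → ℕ)) := by
  refine ⟨(coneM_Mr r).trans span_nnreal_single_one,
    ⟨_, Pi.linearIndependent_single_one (Fin r) ℝ, coneM_Mr r⟩, ?_⟩
  rintro m ⟨e⟩
  exact not_hasRieszRefinement_Mr hr (.of_addEquiv e (hasRieszRefinement_pi_nat (Fin m)))
end
end

section
/- For r ≥ 2 the equality ℝ₊^r ∩ gp(M_r) = M_r holds, where M_r = ℤ₊(1,…,1) + Σ_{j=1}^r ℤ₊(r·e_j) and gp(M_r) = {a ∈ ℤ^r : a₁ ≡ ⋯ ≡ a_r mod r}; in particular M_r is the monoid of lattice points of the cone ℝ₊^r with respect to the lattice gp(M_r). -/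
open scoped NNReal
noncomputable section

/-- ℝ₊^r ∩ gp(M_r) = M_r, i.e. M_r consists exactly of the lattice points
of the nonnegative orthant with respect to the lattice gp(M_r). -/
theorem statement14 (r : ℕ) (hr : 2 ≤ r) :
    {v : Fin r → ℤ | (∀ i, 0 ≤ v i) ∧ v ∈ gp (Mr r)} = (Mr r : Set (Fin r → ℤ)) := by
  have hr0 : 0 < (r : ℤ) := by exact_mod_cast Nat.lt_of_lt_of_le two_pos hr
  set S : Set (Fin r → ℤ) :=
    ({fun _ => 1} ∪ Set.range fun j : Fin r => (r : ℤ) • Pi.single j (1 : ℤ)) with hS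
  have hgpS : gp (Mr r) = AddSubgroup.closure S := by
    unfold gp Mr
    apply le_antisymm
    · rw [AddSubgroup.closure_le]
      intro x hx
      exact AddSubmonoid.closure_le.mpr
        (fun y hy => AddSubgroup.subset_closure hy) hx
    · exact AddSubgroup.closure_mono AddSubmonoid.subset_closure
  ext v
  simp only [Set.mem_setOf_eq, SetLike.mem_coe]
  constructor
  · rintro ⟨hpos, hgp⟩
    rw [hgpS] at hgp
    have hcong : ∀ i j, (r : ℤ) ∣ v i - v j := by
      refine AddSubgroup.closure_induction (fun x hx i j => ?_) (fun i j => ?_)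
        (fun x y _ _ ihx ihy i j => ?_) (fun x _ ihx i j => ?_) hgp
      · rcases hx with hx | ⟨k, rfl⟩
        · simp only [Set.mem_singleton_iff] at hx
          subst hx; simp
        · simp only [Pi.smul_apply, smul_eq_mul]
          exact Dvd.dvd.sub (Dvd.intro _ rfl) (Dvd.intro _ rfl)
      · simp
      · have := dvd_add (ihx i j) (ihy i j)
        simpa [Pi.add_apply, sub_add_sub_comm] using this
      · simp only [Pi.neg_apply, neg_sub_neg]
        exact ihx j i
    set s : ℤ := v ⟨0, by omega⟩ % r with hs
    have hsnn : 0 ≤ s := Int.emod_nonneg _ (by omega)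
    have hvmod : ∀ j, v j % r = s := by
      intro j
      have h := hcong j ⟨0, by omega⟩
      have : v j ≡ v ⟨0, by omega⟩ [ZMOD (r : ℤ)] := Int.ModEq.symm (Int.modEq_iff_dvd.mpr h)
      simpa [Int.ModEq] using this
    have hdivnn : ∀ j, 0 ≤ v j / r := fun j => Int.ediv_nonneg (hpos j) (le_of_lt hr0)
    have h1mem : (fun _ => (1 : ℤ)) ∈ Mr r :=
      AddSubmonoid.subset_closure (Set.mem_union_left _ rfl)
    have hwmem : ∀ j : Fin r, ((r : ℤ) • Pi.single j (1 : ℤ)) ∈ Mr r := fun j =>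
      AddSubmonoid.subset_closure (Set.mem_union_right _ ⟨j, rfl⟩)
    have key : v = s.toNat • (fun _ => (1 : ℤ)) +
        ∑ j : Fin r, (v j / r).toNat • ((r : ℤ) • Pi.single j (1 : ℤ)) := by
      funext i
      have h1 : ((v i / r).toNat : ℤ) = v i / r := Int.toNat_of_nonneg (hdivnn i)
      have h2 : (s.toNat : ℤ) = s := Int.toNat_of_nonneg hsnn
      have hdiv := Int.emod_add_mul_ediv (v i) r
      have hs' : s = v i % r := (hvmod i).symm
      simp only [Pi.add_apply, Finset.sum_apply, Pi.smul_apply, Pi.mul_apply,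
        Pi.natCast_apply, Pi.one_apply, smul_eq_mul,
        nsmul_eq_mul, mul_one, Pi.single_apply, mul_ite, mul_zero, mul_one,
        Finset.sum_ite_eq, Finset.mem_univ, if_true, h1, h2]
      linarith [hdiv]
    rw [key]
    refine AddSubmonoid.add_mem _ ?_ ?_
    · exact nsmul_mem h1mem _
    · exact sum_mem fun j _ =>
        nsmul_mem (hwmem j) _
  · intro hv
    constructor
    · refine AddSubmonoid.closure_induction (fun x hx i => ?_) (fun i => le_refl 0)
        (fun x y _ _ ihx ihy i => ?_) hv
      · rcases hx with hx | ⟨k, rfl⟩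
        · simp only [Set.mem_singleton_iff] at hx; subst hx; norm_num
        · simp only [Pi.smul_apply, smul_eq_mul, Pi.single_apply]
          split <;> simp [le_of_lt hr0]
      · exact add_nonneg (ihx i) (ihy i)
    · exact AddSubgroup.subset_closure hv
end
end

section
/- Let Λ = Λ₀ ⊕ Λ₁ ⊕ Λ₂ ⊕ ⋯ be a ℤ₊-graded commutative ring and let F be a functor from commutative rings to abelian groups such that the two natural maps Λ → Λ[Z] (inclusion of constants) and evaluation Λ[Z] → Λ at Z = 1 and Z = 0 behave functorially. If the natural map F(Λ) → F(Λ[Z]) induced by the inclusion is an isomorphism, then the map F(Λ₀) → F(Λ) induced by the inclusion Λ₀ ⊆ Λ is an isomorphism (Swan–Weibel homotopy trick). -/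
/-!
Sending `λ ∈ 𝒜 i` to `λ X ^ i` is a ring map `A → A[X]` which is a polynomial homotopy from
the projection `A → 𝒜 0 ⊆ A` (evaluate at `X = 0`) to the identity (evaluate at `X = 1`).
Both evaluations are left inverse to `C`, so once `F C` is invertible they have the same image
under `F`, namely `(F C)⁻¹`. Hence `F` sends the projection to the identity, and
`F (𝒜 0 ⊆ A)` is invertible with inverse `F` of the projection.
-/

open CategoryTheory Polynomial DirectSum

namespace GradedRing

variable {A σ : Type*} [CommSemiring A] [SetLike σ A] [AddSubmonoidClass σ A] (𝒜 : ℕ → σ)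
  [GradedRing 𝒜]

noncomputable def toPolynomial : A →+* A[X] :=
  (DirectSum.toSemiring (fun i ↦ (monomial i : A →ₗ[A] A[X]).toAddMonoidHom.comp
      (AddSubmonoidClass.subtype (𝒜 i)))
    (by simp [SetLike.coe_gOne])
    (fun x y ↦ by simp [SetLike.coe_gMul, monomial_mul_monomial])).comp
  (decomposeRingEquiv 𝒜 : A →+* ⨁ i, 𝒜 i)

variable {𝒜}

theorem toPolynomial_of_mem {i : ℕ} {a : A} (ha : a ∈ 𝒜 i) :
    toPolynomial 𝒜 a = monomial i a := by
  lift a to 𝒜 i using ha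
  rw [toPolynomial, RingHom.comp_apply, RingEquiv.coe_toRingHom]
  exact (congrArg _ (decompose_coe 𝒜 a)).trans (toSemiring_of _ _ _ _ _)

variable (𝒜)

theorem evalRingHom_one_comp_toPolynomial :
    (evalRingHom 1).comp (toPolynomial 𝒜) = RingHom.id A := by
  ext a
  induction a using DirectSum.Decomposition.inductionOn 𝒜 with
  | zero => simp
  | homogeneous m => simp [toPolynomial_of_mem m.2]
  | add a b ha hb => simp_all

theorem evalRingHom_zero_comp_toPolynomial :
    (evalRingHom 0).comp (toPolynomial 𝒜) = projZeroRingHom 𝒜 := by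
  ext a
  induction a using DirectSum.Decomposition.inductionOn 𝒜 with
  | zero => simp
  | @homogeneous i m =>
    rcases eq_or_ne i 0 with rfl | hi
    · simp [toPolynomial_of_mem m.2]
    · rw [RingHom.comp_apply, toPolynomial_of_mem m.2, projZeroRingHom_apply,
        decompose_of_mem_ne 𝒜 m.2 hi]
      simp [hi]
  | add a b ha hb => simp_all

end GradedRing

section HomotopyInvariance

universe u

variable {𝒞 : Type*} [Category 𝒞] (F : CommRingCat.{u} ⥤ 𝒞)

theorem map_evalRingHom_eq_of_isIso_map_C {S : Type u} [CommRing S]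
    [IsIso (F.map (CommRingCat.ofHom (C : S →+* S[X])))] (a b : S) :
    F.map (CommRingCat.ofHom (evalRingHom a)) = F.map (CommRingCat.ofHom (evalRingHom b)) := by
  have hsection (c : S) : F.map (CommRingCat.ofHom (C : S →+* S[X])) ≫
      F.map (CommRingCat.ofHom (evalRingHom c)) = 𝟙 _ := by
    have : (evalRingHom c).comp C = RingHom.id S := RingHom.ext fun _ ↦ eval_C
    rw [← F.map_comp, ← CommRingCat.ofHom_comp, this, CommRingCat.ofHom_id, F.map_id]
  rw [← IsIso.inv_eq_of_hom_inv_id (hsection a), IsIso.inv_eq_of_hom_inv_id (hsection b)]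

theorem map_eq_of_polynomialHomotopy {R S : Type u} [CommRing R] [CommRing S]
    [IsIso (F.map (CommRingCat.ofHom (C : S →+* S[X])))] (H : R →+* S[X]) :
    F.map (CommRingCat.ofHom ((evalRingHom 0).comp H)) =
      F.map (CommRingCat.ofHom ((evalRingHom 1).comp H)) := by
  rw [CommRingCat.ofHom_comp, F.map_comp, map_evalRingHom_eq_of_isIso_map_C F 0 1,
    ← F.map_comp, ← CommRingCat.ofHom_comp]

end HomotopyInvariance

/-- Swan–Weibel homotopy trick: for a ℤ₊-graded commutative ring
`Λ = Λ₀ ⊕ Λ₁ ⊕ ⋯` and a functor `F` from commutative rings to abelian groups, if the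
map `F(Λ) → F(Λ[Z])` induced by the inclusion of constants is an isomorphism, then
`F(Λ₀) → F(Λ)` induced by `Λ₀ ⊆ Λ` is an isomorphism. -/
theorem statement15 (A : Type) [CommRing A] (𝒜 : ℕ → Submodule ℤ A) [GradedRing 𝒜]
    (F : CommRingCat.{0} ⥤ AddCommGrpCat.{0})
    (hiso : IsIso (F.map (CommRingCat.ofHom (Polynomial.C : A →+* A[X])))) :
    IsIso (F.map (CommRingCat.ofHom (SetLike.GradeZero.subring 𝒜).subtype)) := by
  let π : A →+* SetLike.GradeZero.subring 𝒜 :=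
    (GradedRing.projZeroRingHom 𝒜).codRestrict _ fun a ↦ SetLike.coe_mem (decompose 𝒜 a 0)
  have hπι : π.comp (SetLike.GradeZero.subring 𝒜).subtype = RingHom.id _ :=
    RingHom.ext fun a ↦ Subtype.ext (decompose_of_mem_same 𝒜 a.2)
  have hιπ : (SetLike.GradeZero.subring 𝒜).subtype.comp π =
      (evalRingHom 0).comp (GradedRing.toPolynomial 𝒜) :=
    (GradedRing.evalRingHom_zero_comp_toPolynomial 𝒜).symm
  refine ⟨F.map (CommRingCat.ofHom π), ?_, ?_⟩
  · rw [← F.map_comp, ← CommRingCat.ofHom_comp, hπι, CommRingCat.ofHom_id, F.map_id]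
  · rw [← F.map_comp, ← CommRingCat.ofHom_comp, hιπ, map_eq_of_polynomialHomotopy,
      GradedRing.evalRingHom_one_comp_toPolynomial, CommRingCat.ofHom_id, F.map_id]
end

section
/- Let C ⊆ (ℝ^n)* be a rational simplicial n-cone, F ⊆ C a facet, and l the edge of the dual cone C* ⊆ ℝ^n corresponding to F under duality (i.e., l = C* ∩ F^⊥). Let e be the lattice generator of l ∩ ℤ^n ≅ ℤ₊ and N₊ = C* ∩ ℤ^n. Then there is a rank-(n−1) simplicial normal affine monoid M′ such that ℤ₋e + N₊, as a monoid, equals ℤe + M′ (direct sum), and (ℝe + ℝ₊M′)* = F. -/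
open scoped NNReal
noncomputable section

/-- The standard pairing between `ℝⁿ` (viewed as the dual space via the dot product)
and `ℝⁿ`. -/
def dotP {n : ℕ} (φ x : Fin n → ℝ) : ℝ := ∑ i, φ i * x i

/-!
Write `f j` for the rows of `w`, so that `C* = {x | ∀ j, 0 ≤ f j ⬝ᵥ x}` and `l` is the ray of `C*`
on which every `f j` with `j ≠ j₀` vanishes. Since `l` is a ray, its lattice generator `e` is
primitive, so `z ⬝ᵥ e = 1` for some `z ∈ ℤⁿ` and `ℤⁿ = ℤe ⊕ z^⊥`. Take
`M' = {x ∈ z^⊥ | ∀ j ≠ j₀, 0 ≤ f j ⬝ᵥ x}`. Clearing denominators in the inverse of `w` gives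
lattice vectors `b k` with `f j ⬝ᵥ b k = D δⱼₖ`, and their projections
`v k = b k - (z ⬝ᵥ b k) • e` (`k ≠ j₀`) behave like a dual basis of the `f j` on `z^⊥`:
they are linearly independent, span the cone of `M'`, and the finitely many points of `M'` in
their parallelepiped generate `M'` (Gordan's lemma); adding a large multiple of `∑ v k` shows
`M' - M' = z^⊥`, of rank `n - 1`. Both `ℤ₋e + N₊` and `ℤe + M'` are the lattice points on which
the `f j`, `j ≠ j₀`, are nonnegative. Finally a functional nonnegative on `ℝe + ℝ₊M'` vanishes
on `e` and is nonnegative on the `v k`, so its coordinates in the basis `f` are those of a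
point of `F`.
-/

namespace SimplicialCone

open Matrix

@[simp] lemma toR_apply {r : ℕ} (v : Fin r → ℤ) (i : Fin r) : toR v i = v i := rfl

@[simp] lemma toR_zero {r : ℕ} : toR (0 : Fin r → ℤ) = 0 := by
  funext i; simp

@[simp] lemma toR_add {r : ℕ} (x y : Fin r → ℤ) : toR (x + y) = toR x + toR y := by
  funext i; simp

@[simp] lemma toR_sub {r : ℕ} (x y : Fin r → ℤ) : toR (x - y) = toR x - toR y := by
  funext i; simp

@[simp] lemma toR_zsmul {r : ℕ} (a : ℤ) (x : Fin r → ℤ) : toR (a • x) = (a : ℝ) • toR x := by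
  funext i; simp

@[simp] lemma toR_nsmul {r : ℕ} (a : ℕ) (x : Fin r → ℤ) : toR (a • x) = (a : ℝ) • toR x := by
  funext i; simp

@[simp] lemma toR_sum {r : ℕ} {ι : Type*} (s : Finset ι) (x : ι → Fin r → ℤ) :
    toR (∑ k ∈ s, x k) = ∑ k ∈ s, toR (x k) := by
  funext i; simp [Finset.sum_apply]

@[simp] lemma toR_dotProduct {r : ℕ} (x y : Fin r → ℤ) :
    ((x ⬝ᵥ y : ℤ) : ℝ) = toR x ⬝ᵥ toR y := by
  simp [dotProduct]

lemma norm_toR {r : ℕ} (x : Fin r → ℤ) : ‖toR x‖ = ‖x‖ := by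
  simp only [Pi.norm_def, toR]
  congr 2 with i

lemma dotP_eq_dotProduct {n : ℕ} (φ x : Fin n → ℝ) : dotP φ x = φ ⬝ᵥ x := rfl

lemma finite_setOf_norm_toR_le {r : ℕ} (R : ℝ) : {x : Fin r → ℤ | ‖toR x‖ ≤ R}.Finite := by
  simpa only [norm_toR, Metric.closedBall, dist_zero_right] using
    (isCompact_closedBall (0 : Fin r → ℤ) R).finite_of_discrete

section Cones

variable {n : ℕ}

lemma dotProduct_nonneg_of_mem_span {S : Set (Fin n → ℝ)} {x φ : Fin n → ℝ}
    (h : ∀ s ∈ S, 0 ≤ s ⬝ᵥ x) (hφ : φ ∈ Submodule.span ℝ≥0 S) : 0 ≤ φ ⬝ᵥ x := by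
  induction hφ using Submodule.span_induction with
  | mem s hs => exact h s hs
  | zero => simp
  | add φ ψ _ _ hφ hψ => rw [add_dotProduct]; positivity
  | smul a φ _ hφ => rw [NNReal.smul_def, smul_dotProduct, smul_eq_mul]; positivity

lemma dotProduct_eq_zero_of_mem_span {S : Set (Fin n → ℝ)} {x φ : Fin n → ℝ}
    (h : ∀ s ∈ S, s ⬝ᵥ x = 0) (hφ : φ ∈ Submodule.span ℝ≥0 S) : φ ⬝ᵥ x = 0 := by
  have hle : 0 ≤ φ ⬝ᵥ x := dotProduct_nonneg_of_mem_span (fun s hs => (h s hs).ge) hφ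
  have hge : 0 ≤ φ ⬝ᵥ -x :=
    dotProduct_nonneg_of_mem_span (fun s hs => by simp [h s hs]) hφ
  rw [dotProduct_neg] at hge
  linarith

lemma forall_mem_span_nonneg_iff {ι : Type*} (g : ι → Fin n → ℝ) (x : Fin n → ℝ) :
    (∀ φ ∈ Submodule.span ℝ≥0 (Set.range g), 0 ≤ φ ⬝ᵥ x) ↔ ∀ k, 0 ≤ g k ⬝ᵥ x :=
  ⟨fun h k => h _ (Submodule.subset_span ⟨k, rfl⟩),
    fun h _ => dotProduct_nonneg_of_mem_span (by rintro _ ⟨k, rfl⟩; exact h k)⟩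

lemma forall_mem_span_eq_zero_iff {ι : Type*} (g : ι → Fin n → ℝ) (x : Fin n → ℝ) :
    (∀ φ ∈ Submodule.span ℝ≥0 (Set.range g), φ ⬝ᵥ x = 0) ↔ ∀ k, g k ⬝ᵥ x = 0 :=
  ⟨fun h k => h _ (Submodule.subset_span ⟨k, rfl⟩),
    fun h _ => dotProduct_eq_zero_of_mem_span (by rintro _ ⟨k, rfl⟩; exact h k)⟩

lemma setOf_dual_span_range {ι : Type*} (g : ι → Fin n → ℝ) :
    {x | ∀ φ ∈ (Submodule.span ℝ≥0 (Set.range g) : Set (Fin n → ℝ)), 0 ≤ dotP φ x} =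
      {x | ∀ k, 0 ≤ g k ⬝ᵥ x} :=
  Set.ext fun x => forall_mem_span_nonneg_iff g x

end Cones

section Independent

variable {n : ℕ} {f : Fin n → Fin n → ℝ}

lemma eq_zero_of_forall_dotProduct_eq_zero (hf : LinearIndependent ℝ f) {x : Fin n → ℝ}
    (hx : ∀ j, f j ⬝ᵥ x = 0) : x = 0 := by
  have hinj := mulVec_injective_iff_isUnit.mpr (linearIndependent_rows_iff_isUnit.mp hf)
  exact hinj (by ext j; simpa [mulVec] using hx j)

lemma exists_eq_sum_smul (hf : LinearIndependent ℝ f) (φ : Fin n → ℝ) :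
    ∃ a : Fin n → ℝ, ∑ j, a j • f j = φ := by
  have hspan := hf.span_eq_top_of_card_eq_finrank' (by simp)
  exact Submodule.mem_span_range_iff_exists_fun ℝ |>.mp (hspan ▸ Submodule.mem_top)

lemma linearIndependent_of_dotProduct_eq_ite {ι : Type*} [Fintype ι] [DecidableEq ι]
    {g φ : ι → Fin n → ℝ} {D : ℝ} (hD : D ≠ 0)
    (hg : ∀ j k, φ j ⬝ᵥ g k = if j = k then D else 0) : LinearIndependent ℝ g := by
  rw [Fintype.linearIndependent_iff]
  intro a ha j
  have := congrArg (φ j ⬝ᵥ ·) ha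
  simp only [dotProduct_sum, dotProduct_smul, hg, smul_eq_mul, mul_ite, mul_zero,
    Finset.sum_ite_eq, Finset.mem_univ, if_true, dotProduct_zero] at this
  exact (mul_eq_zero.mp this).resolve_right hD

end Independent

lemma exists_int_mul_eq_smul_one {m : Type*} [Fintype m] [DecidableEq m] {W : Matrix m m ℚ}
    (hW : IsUnit W) : ∃ D : ℤ, 0 < D ∧ ∃ B : Matrix m m ℤ, W * B.map (↑) = (D : ℚ) • 1 := by
  obtain ⟨⟨d, hd⟩, hdW⟩ := IsLocalization.exist_integer_multiples_of_finite
    (nonZeroDivisors ℤ) (fun p : m × m => W⁻¹ p.1 p.2)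
  choose B hB using hdW
  have hd0 : d ≠ 0 := nonZeroDivisors.ne_zero hd
  -- `d` may be negative, hence the scale `d * d`
  refine ⟨d * d, mul_self_pos.mpr hd0, d • Matrix.of fun i k => B (i, k), ?_⟩
  have hmap : (d • Matrix.of fun i k => B (i, k)).map (Int.cast : ℤ → ℚ) =
      ((d * d : ℤ) : ℚ) • W⁻¹ := by
    ext i k
    have := hB (i, k)
    simp only [Algebra.smul_def, algebraMap_int_eq, eq_intCast] at this
    simp [this, mul_assoc]
  rw [hmap, Matrix.mul_smul, Matrix.mul_nonsing_inv _ ((isUnit_iff_isUnit_det W).mp hW)]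

lemma exists_int_dual_vectors {n : ℕ} (w : Fin n → Fin n → ℚ)
    (hli : LinearIndependent ℝ (fun j i => (w j i : ℝ) : Fin n → Fin n → ℝ)) :
    ∃ D : ℤ, 0 < D ∧ ∃ b : Fin n → Fin n → ℤ,
      ∀ j k, (fun i => (w j i : ℝ)) ⬝ᵥ toR (b k) = if j = k then (D : ℝ) else 0 := by
  have hunit : IsUnit (Matrix.of w) := by
    have hR : IsUnit ((Matrix.of w).map (Rat.castHom ℝ)) :=
      linearIndependent_rows_iff_isUnit.mp hli
    rw [isUnit_iff_isUnit_det, ← RingHom.mapMatrix_apply, ← RingHom.map_det,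
      isUnit_map_iff] at hR
    exact (isUnit_iff_isUnit_det _).mpr hR
  obtain ⟨D, hD, B, hB⟩ := exists_int_mul_eq_smul_one hunit
  refine ⟨D, hD, fun k i => B i k, fun j k => ?_⟩
  have := congrArg (fun M => ((M j k : ℚ) : ℝ)) hB
  by_cases hjk : j = k <;> simpa [mul_apply, dotProduct, hjk] using this

lemma exists_dotProduct_eq_one_of_primitive {ι : Type*} [Fintype ι] {e : ι → ℤ} (he : e ≠ 0)
    (hprim : ∀ (g : ℤ) (y : ι → ℤ), 0 < g → e = g • y → g = 1) : ∃ z : ι → ℤ, z ⬝ᵥ e = 1 := by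
  obtain ⟨g, hg⟩ := (IsPrincipalIdealRing.principal (Ideal.span (Set.range e))).principal
  have hdvd : ∀ i, g ∣ e i := fun i => by
    rw [← Ideal.mem_span_singleton, ← Ideal.submodule_span_eq, ← hg]
    exact Ideal.subset_span ⟨i, rfl⟩
  have hg0 : g ≠ 0 := by
    rintro rfl
    exact he (funext fun i => zero_dvd_iff.mp (hdvd i))
  have hg1 : |g| = 1 := hprim |g| (fun i => e i / |g|) (abs_pos.mpr hg0) <| funext fun i =>
    (Int.mul_ediv_cancel' ((abs_dvd _ _).mpr (hdvd i))).symm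
  have htop : Ideal.span (Set.range e) = ⊤ := by
    rw [hg, Ideal.submodule_span_eq, Ideal.span_singleton_eq_top, Int.isUnit_iff_abs_eq, hg1]
  exact Ideal.mem_span_range_iff_exists_fun.mp (htop ▸ Submodule.mem_top)

/-- The edge `l = C* ∩ F^⊥`, for `C` spanned by the `f j` and `F` by the `f j` with `j ≠ j₀`. -/
def edge {n : ℕ} (f : Fin n → Fin n → ℝ) (j₀ : Fin n) : Set (Fin n → ℝ) :=
  {x | (∀ j, 0 ≤ f j ⬝ᵥ x) ∧ ∀ j ≠ j₀, f j ⬝ᵥ x = 0}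

lemma setOf_dual_inter_perp_eq_edge {n : ℕ} (f : Fin n → Fin n → ℝ) (j₀ : Fin n) :
    {x ∈ {x | ∀ j, 0 ≤ f j ⬝ᵥ x} |
      ∀ φ ∈ (Submodule.span ℝ≥0 (Set.range fun j : {j // j ≠ j₀} => f j) : Set (Fin n → ℝ)),
        dotP φ x = 0} = edge f j₀ := by
  ext x
  simp only [Set.mem_sep_iff, SetLike.mem_coe, dotP_eq_dotProduct, forall_mem_span_eq_zero_iff,
    Subtype.forall]
  rfl

section Generator

variable {n : ℕ} {f : Fin n → Fin n → ℝ} {j₀ : Fin n} {e : Fin n → ℤ}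

lemma dotProduct_generator_eq_zero (he : ∀ v, toR v ∈ edge f j₀ ↔ ∃ t : ℕ, v = (t : ℤ) • e) :
    ∀ j ≠ j₀, f j ⬝ᵥ toR e = 0 :=
  ((he e).mpr ⟨1, by simp⟩).2

lemma dotProduct_generator_pos (he : ∀ v, toR v ∈ edge f j₀ ↔ ∃ t : ℕ, v = (t : ℤ) • e)
    {b : Fin n → ℤ} {D : ℝ} (hD : 0 < D) (hb : ∀ j, f j ⬝ᵥ toR b = if j = j₀ then D else 0) :
    0 < f j₀ ⬝ᵥ toR e := by
  have hbl : toR b ∈ edge f j₀ :=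
    ⟨fun j => by rw [hb]; split_ifs <;> linarith, fun j hj => by rw [hb, if_neg hj]⟩
  have hb₀ := hb j₀
  obtain ⟨t, rfl⟩ := (he b).mp hbl
  rw [if_pos rfl, toR_zsmul, dotProduct_smul, smul_eq_mul] at hb₀
  exact pos_of_mul_pos_right (hb₀ ▸ hD) (by simp)

lemma exists_dotProduct_generator_eq_one
    (he : ∀ v, toR v ∈ edge f j₀ ↔ ∃ t : ℕ, v = (t : ℤ) • e) (hpos : 0 < f j₀ ⬝ᵥ toR e) :
    ∃ z : Fin n → ℤ, z ⬝ᵥ e = 1 := by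
  have he0 : e ≠ 0 := by
    rintro rfl
    simp at hpos
  refine exists_dotProduct_eq_one_of_primitive he0 fun g y hg hey => ?_
  have hgR : (0 : ℝ) < g := by exact_mod_cast hg
  have hscale : ∀ j, f j ⬝ᵥ toR e = g * f j ⬝ᵥ toR y := fun j => by
    rw [hey, toR_zsmul, dotProduct_smul, smul_eq_mul]
  have hy : toR y ∈ edge f j₀ := by
    refine ⟨fun j => ?_, fun j hj => ?_⟩
    · exact (mul_nonneg_iff_of_pos_left hgR).mp (hscale j ▸ ((he e).mpr ⟨1, by simp⟩).1 j)
    · exact (mul_eq_zero.mp ((hscale j).symm.trans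
        (dotProduct_generator_eq_zero he j hj))).resolve_left hgR.ne'
  obtain ⟨t, rfl⟩ := (he y).mp hy
  have hgt : (g * t - 1) • e = 0 := by
    rw [sub_smul, mul_smul, ← hey, one_smul, sub_self]
  exact Int.eq_one_of_mul_eq_one_right hg.le
    (sub_eq_zero.mp ((smul_eq_zero.mp hgt).resolve_right he0))

lemma exists_nonneg_sub_nsmul_iff (he₀ : ∀ j ≠ j₀, f j ⬝ᵥ toR e = 0) (hpos : 0 < f j₀ ⬝ᵥ toR e)
    (v : Fin n → ℤ) :
    (∃ (t : ℕ) (u : Fin n → ℤ), (∀ j, 0 ≤ f j ⬝ᵥ toR u) ∧ v = u - (t : ℤ) • e) ↔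
      ∀ j ≠ j₀, 0 ≤ f j ⬝ᵥ toR v := by
  constructor
  · rintro ⟨t, u, hu, rfl⟩ j hj
    rw [toR_sub, toR_zsmul, dotProduct_sub, dotProduct_smul, he₀ j hj, smul_zero, sub_zero]
    exact hu j
  · intro hv
    refine ⟨⌈-(f j₀ ⬝ᵥ toR v) / f j₀ ⬝ᵥ toR e⌉₊, _, fun j => ?_, (add_sub_cancel_right _ _).symm⟩
    rw [toR_add, toR_zsmul, dotProduct_add, dotProduct_smul, smul_eq_mul]
    rcases eq_or_ne j j₀ with rfl | hj
    · have := Nat.le_ceil (-(f j ⬝ᵥ toR v) / f j ⬝ᵥ toR e)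
      rw [div_le_iff₀ hpos] at this
      push_cast
      linarith
    · rw [he₀ j hj, mul_zero, add_zero]
      exact hv j hj

end Generator

section FacetMonoid

variable {n : ℕ} (f : Fin n → Fin n → ℝ) (j₀ : Fin n) (z : Fin n → ℤ)

/-- The monoid `M'`: the lattice points of `z^⊥` in the dual cone of the facet `F`. -/
def facetMonoid : AddSubmonoid (Fin n → ℤ) where
  carrier := {x | z ⬝ᵥ x = 0 ∧ ∀ j ≠ j₀, 0 ≤ f j ⬝ᵥ toR x}
  add_mem' := by
    rintro x y ⟨hx, hx'⟩ ⟨hy, hy'⟩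
    refine ⟨by rw [dotProduct_add, hx, hy, add_zero], fun j hj => ?_⟩
    rw [toR_add, dotProduct_add]
    exact add_nonneg (hx' j hj) (hy' j hj)
  zero_mem' := ⟨dotProduct_zero z, fun j _ => by simp⟩

variable {f j₀ z}

lemma mem_facetMonoid {x : Fin n → ℤ} :
    x ∈ facetMonoid f j₀ z ↔ z ⬝ᵥ x = 0 ∧ ∀ j ≠ j₀, 0 ≤ f j ⬝ᵥ toR x :=
  Iff.rfl

lemma isNormalMonoid_facetMonoid : IsNormalMonoid (facetMonoid f j₀ z) := by
  intro c x hc _ hcx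
  have hcR : (0 : ℝ) < c := by exact_mod_cast hc
  obtain ⟨hz, hf⟩ := mem_facetMonoid.mp hcx
  refine ⟨?_, fun j hj => ?_⟩
  · rw [dotProduct_smul, smul_eq_mul] at hz
    exact (mul_eq_zero.mp hz).resolve_left (by exact_mod_cast hc.ne')
  · have := hf j hj
    rw [toR_zsmul, dotProduct_smul, smul_eq_mul] at this
    exact (mul_nonneg_iff_of_pos_left (by exact_mod_cast hcR)).mp this

lemma exists_zsmul_add_mem_facetMonoid_iff {e : Fin n → ℤ} (he₁ : z ⬝ᵥ e = 1)
    (he₀ : ∀ j ≠ j₀, f j ⬝ᵥ toR e = 0) (v : Fin n → ℤ) :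
    (∃ (a : ℤ) (m : Fin n → ℤ), m ∈ facetMonoid f j₀ z ∧ v = a • e + m) ↔
      ∀ j ≠ j₀, 0 ≤ f j ⬝ᵥ toR v := by
  have hshift : ∀ (a : ℤ) (x : Fin n → ℤ) (j) (hj : j ≠ j₀),
      f j ⬝ᵥ toR (a • e + x) = f j ⬝ᵥ toR x := fun a x j hj => by
    rw [toR_add, toR_zsmul, dotProduct_add, dotProduct_smul, he₀ j hj, smul_zero, zero_add]
  constructor
  · rintro ⟨a, m, hm, rfl⟩ j hj
    rw [hshift a m j hj]
    exact (mem_facetMonoid.mp hm).2 j hj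
  · intro hv
    refine ⟨z ⬝ᵥ v, -(z ⬝ᵥ v) • e + v, ⟨?_, fun j hj => ?_⟩,
      by rw [neg_smul, add_neg_cancel_left]⟩
    · rw [dotProduct_add, dotProduct_smul, he₁, smul_eq_mul, mul_one, neg_add_cancel]
    · rw [hshift _ v j hj]
      exact hv j hj

lemma eq_of_zsmul_add_eq {e : Fin n → ℤ} (he₁ : z ⬝ᵥ e = 1) {a a' : ℤ} {m m' : Fin n → ℤ}
    (hm : m ∈ facetMonoid f j₀ z) (hm' : m' ∈ facetMonoid f j₀ z)
    (h : a • e + m = a' • e + m') : a = a' ∧ m = m' := by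
  have ha : a = a' := by
    have := congrArg (z ⬝ᵥ ·) h
    simpa only [dotProduct_add, dotProduct_smul, he₁, (mem_facetMonoid.mp hm).1,
      (mem_facetMonoid.mp hm').1, smul_eq_mul, mul_one, add_zero] using this
  subst ha
  exact ⟨rfl, add_left_cancel h⟩

end FacetMonoid

section FacetVectors

variable {n : ℕ} {f : Fin n → Fin n → ℝ} {j₀ : Fin n} {z : Fin n → ℤ}
  {v : {j // j ≠ j₀} → Fin n → ℤ} {D : ℝ}

lemma exists_facet_vectors {b : Fin n → Fin n → ℤ}
    (hb : ∀ j k, f j ⬝ᵥ toR (b k) = if j = k then D else 0) {e : Fin n → ℤ}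
    (he₀ : ∀ j ≠ j₀, f j ⬝ᵥ toR e = 0) (he₁ : z ⬝ᵥ e = 1) :
    ∃ v : {j // j ≠ j₀} → Fin n → ℤ,
      (∀ j k : {j // j ≠ j₀}, f j ⬝ᵥ toR (v k) = if j = k then D else 0) ∧
        ∀ k, z ⬝ᵥ v k = 0 := by
  refine ⟨fun k => b k - (z ⬝ᵥ b k) • e, fun j k => ?_, fun k => ?_⟩
  · simp only [toR_sub, toR_zsmul, dotProduct_sub, dotProduct_smul, he₀ j j.2, smul_zero,
      sub_zero, hb, Subtype.ext_iff]
  · rw [dotProduct_sub, dotProduct_smul, he₁, smul_eq_mul, mul_one, sub_self]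

lemma dotProduct_toR_sum_nsmul
    (hv : ∀ j k : {j // j ≠ j₀}, f j ⬝ᵥ toR (v k) = if j = k then D else 0)
    (m : {j // j ≠ j₀} → ℕ) (j : {j // j ≠ j₀}) :
    f j ⬝ᵥ toR (∑ k, m k • v k) = m j * D := by
  simp only [toR_sum, toR_nsmul, dotProduct_sum, dotProduct_smul, hv, smul_eq_mul, mul_ite,
    mul_zero, Finset.sum_ite_eq, Finset.mem_univ, if_true]

lemma eq_smul_of_dotProduct_eq_zero (hf : LinearIndependent ℝ f) {e y : Fin n → ℝ}
    (he₀ : ∀ j ≠ j₀, f j ⬝ᵥ e = 0) (he : f j₀ ⬝ᵥ e ≠ 0) (hy : ∀ j ≠ j₀, f j ⬝ᵥ y = 0) :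
    y = (f j₀ ⬝ᵥ y / f j₀ ⬝ᵥ e) • e := by
  rw [← sub_eq_zero]
  refine eq_zero_of_forall_dotProduct_eq_zero hf fun j => ?_
  rw [dotProduct_sub, dotProduct_smul, smul_eq_mul]
  rcases eq_or_ne j j₀ with rfl | hj
  · field_simp
    ring
  · rw [he₀ j hj, hy j hj, mul_zero, sub_zero]

lemma toR_eq_sum_of_dotProduct_eq_zero (hf : LinearIndependent ℝ f) {e : Fin n → ℤ}
    (he₁ : z ⬝ᵥ e = 1) (he₀ : ∀ j ≠ j₀, f j ⬝ᵥ toR e = 0) (he : f j₀ ⬝ᵥ toR e ≠ 0)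
    (hD : D ≠ 0) (hv : ∀ j k : {j // j ≠ j₀}, f j ⬝ᵥ toR (v k) = if j = k then D else 0)
    (hvz : ∀ k, z ⬝ᵥ v k = 0) {x : Fin n → ℤ} (hx : z ⬝ᵥ x = 0) :
    toR x = ∑ k : {j // j ≠ j₀}, (f k ⬝ᵥ toR x / D) • toR (v k) := by
  -- the difference lies on the line `ℝe` (all `f j`, `j ≠ j₀`, vanish on it) and in `z^⊥`
  set y := toR x - ∑ k : {j // j ≠ j₀}, (f k ⬝ᵥ toR x / D) • toR (v k)
  have hy : ∀ j ≠ j₀, f j ⬝ᵥ y = 0 := fun j hj => by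
    simp [y, dotProduct_sub, dotProduct_sum, dotProduct_smul, hv ⟨j, hj⟩, hD]
  have hzy : toR z ⬝ᵥ y = 0 := by
    simp [y, dotProduct_sub, dotProduct_sum, dotProduct_smul, ← toR_dotProduct, hx, hvz]
  have hze : toR z ⬝ᵥ toR e = 1 := by
    rw [← toR_dotProduct, he₁, Int.cast_one]
  rw [eq_smul_of_dotProduct_eq_zero hf he₀ he hy, dotProduct_smul, hze, smul_eq_mul,
    mul_one] at hzy
  have : y = 0 := by rw [eq_smul_of_dotProduct_eq_zero hf he₀ he hy, hzy, zero_smul]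
  exact sub_eq_zero.mp this

lemma coneM_facetMonoid (hD : 0 < D) (hvM : ∀ k, v k ∈ facetMonoid f j₀ z)
    (hdec : ∀ x ∈ facetMonoid f j₀ z,
      toR x = ∑ k : {j // j ≠ j₀}, (f k ⬝ᵥ toR x / D) • toR (v k)) :
    coneM (facetMonoid f j₀ z) = Submodule.span ℝ≥0 (Set.range fun k => toR (v k)) := by
  refine congrArg SetLike.coe (le_antisymm (Submodule.span_le.mpr ?_) (Submodule.span_le.mpr ?_))
  · rintro _ ⟨x, hx, rfl⟩
    rw [SetLike.mem_coe, hdec x hx]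
    refine Submodule.sum_mem _ fun k _ => ?_
    have hk : 0 ≤ f k ⬝ᵥ toR x / D := div_nonneg ((mem_facetMonoid.mp hx).2 k k.2) hD.le
    exact Submodule.smul_mem _ (⟨_, hk⟩ : ℝ≥0) (Submodule.subset_span ⟨k, rfl⟩)
  · rintro _ ⟨k, rfl⟩
    exact Submodule.subset_span ⟨v k, hvM k, rfl⟩

lemma fg_facetMonoid (hD : 0 < D)
    (hv : ∀ j k : {j // j ≠ j₀}, f j ⬝ᵥ toR (v k) = if j = k then D else 0)
    (hvM : ∀ k, v k ∈ facetMonoid f j₀ z)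
    (hdec : ∀ x ∈ facetMonoid f j₀ z,
      toR x = ∑ k : {j // j ≠ j₀}, (f k ⬝ᵥ toR x / D) • toR (v k)) :
    (facetMonoid f j₀ z).FG := by
  set M := facetMonoid f j₀ z
  -- the points of `M` in the parallelepiped `∑ k, [0, 1] • v k`
  set B := {x | x ∈ M ∧ ∀ k : {j // j ≠ j₀}, f k ⬝ᵥ toR x ≤ D}
  have hB : B.Finite := by
    refine (finite_setOf_norm_toR_le (∑ k, ‖toR (v k)‖)).subset fun x ⟨hx, hxD⟩ => ?_
    show ‖toR x‖ ≤ _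
    rw [hdec x hx]
    refine (norm_sum_le _ _).trans (Finset.sum_le_sum fun k _ => ?_)
    have h0 : 0 ≤ f k ⬝ᵥ toR x / D := div_nonneg ((mem_facetMonoid.mp hx).2 k k.2) hD.le
    have h1 : f k ⬝ᵥ toR x / D ≤ 1 := (div_le_one hD).mpr (hxD k)
    rw [norm_smul, Real.norm_of_nonneg h0]
    exact mul_le_of_le_one_left (norm_nonneg _) h1
  refine ⟨hB.toFinset, le_antisymm (AddSubmonoid.closure_le.mpr fun x hx => ?_) fun x hx => ?_⟩
  · exact (hB.mem_toFinset.mp hx).1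
  rw [Set.Finite.coe_toFinset]
  have hvB : ∀ k, v k ∈ B := fun k => ⟨hvM k, fun j => by rw [hv]; split_ifs <;> linarith⟩
  set m : {j // j ≠ j₀} → ℕ := fun k => ⌊f k ⬝ᵥ toR x / D⌋₊
  have hpair : ∀ j : {j // j ≠ j₀},
      f j ⬝ᵥ toR (x - ∑ k, m k • v k) = f j ⬝ᵥ toR x - m j * D := fun j => by
    rw [toR_sub, dotProduct_sub, dotProduct_toR_sum_nsmul hv]
  have hyB : x - ∑ k, m k • v k ∈ B := by
    refine ⟨⟨?_, fun j hj => ?_⟩, fun j => ?_⟩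
    · simp only [dotProduct_sub, dotProduct_sum, dotProduct_smul, (mem_facetMonoid.mp hx).1,
        (mem_facetMonoid.mp (hvM _)).1, smul_zero, Finset.sum_const_zero, sub_zero]
    · have := Nat.floor_le (div_nonneg ((mem_facetMonoid.mp hx).2 j hj) hD.le)
      rw [hpair ⟨j, hj⟩, sub_nonneg]
      exact (le_div_iff₀ hD).mp this
    · have := Nat.lt_floor_add_one (f j ⬝ᵥ toR x / D)
      rw [hpair j]
      rw [div_lt_iff₀ hD] at this
      linarith
  rw [← sub_add_cancel x (∑ k, m k • v k)]
  exact add_mem (AddSubmonoid.subset_closure hyB)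
    (sum_mem fun k _ => nsmul_mem (AddSubmonoid.subset_closure (hvB k)) _)

lemma gp_facetMonoid (hD : 0 < D)
    (hv : ∀ j k : {j // j ≠ j₀}, f j ⬝ᵥ toR (v k) = if j = k then D else 0)
    (hvM : ∀ k, v k ∈ facetMonoid f j₀ z) :
    gp (facetMonoid f j₀ z) = (LinearMap.ker (dotProductEquiv ℤ (Fin n) z)).toAddSubgroup := by
  refine le_antisymm ((AddSubgroup.closure_le _).mpr fun x hx => (mem_facetMonoid.mp hx).1)
    fun x hx => ?_
  have hx : z ⬝ᵥ x = 0 := hx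
  obtain ⟨N, hN⟩ : ∃ N : ℕ, ∀ j : {j // j ≠ j₀}, -(f j ⬝ᵥ toR x) ≤ N * D :=
    (Filter.eventually_all.2 fun j : {j // j ≠ j₀} =>
      (tendsto_natCast_atTop_atTop.atTop_mul_const hD).eventually_ge_atTop _).exists
  have hy : x + ∑ k, N • v k ∈ facetMonoid f j₀ z := by
    refine ⟨?_, fun j hj => ?_⟩
    · simp only [dotProduct_add, dotProduct_sum, dotProduct_smul, hx,
        (mem_facetMonoid.mp (hvM _)).1, smul_zero, Finset.sum_const_zero, add_zero]
    · rw [toR_add, dotProduct_add, dotProduct_toR_sum_nsmul hv (fun _ => N) ⟨j, hj⟩]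
      linarith [hN ⟨j, hj⟩]
  rw [← add_sub_cancel_right x (∑ k, N • v k)]
  exact sub_mem (AddSubgroup.subset_closure hy)
    (sum_mem fun k _ => nsmul_mem (AddSubgroup.subset_closure (hvM k)) _)

lemma mem_span_facet_of_dotProduct (hf : LinearIndependent ℝ f) {e : Fin n → ℝ}
    (he₀ : ∀ j ≠ j₀, f j ⬝ᵥ e = 0) (he : f j₀ ⬝ᵥ e ≠ 0) {g : {j // j ≠ j₀} → Fin n → ℝ}
    (hD : 0 < D) (hg : ∀ j k : {j // j ≠ j₀}, f j ⬝ᵥ g k = if j = k then D else 0)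
    {φ : Fin n → ℝ} (hφe : φ ⬝ᵥ e = 0) (hφg : ∀ k, 0 ≤ φ ⬝ᵥ g k) :
    φ ∈ Submodule.span ℝ≥0 (Set.range fun j : {j // j ≠ j₀} => f j) := by
  obtain ⟨a, rfl⟩ := exists_eq_sum_smul hf φ
  have hpair : ∀ x, (∑ j, a j • f j) ⬝ᵥ x = ∑ j, a j * f j ⬝ᵥ x := fun x => by
    simp [sum_dotProduct, smul_dotProduct]
  have ha₀ : a j₀ = 0 := by
    rw [hpair, Finset.sum_eq_single j₀ (fun j _ hj => by rw [he₀ j hj, mul_zero]) (by simp)]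
      at hφe
    exact (mul_eq_zero.mp hφe).resolve_right he
  have ha : ∀ k : {j // j ≠ j₀}, 0 ≤ a k := fun k => by
    have hk : ∑ j, a j * f j ⬝ᵥ g k = a k * D := by
      rw [Finset.sum_eq_single (k : Fin n) (fun j _ hj => ?_) (by simp), hg k k, if_pos rfl]
      rcases eq_or_ne j j₀ with rfl | hj₀
      · rw [ha₀, zero_mul]
      · rw [hg ⟨j, hj₀⟩ k, if_neg fun h => hj (congrArg Subtype.val h), mul_zero]
    have := hφg k
    rw [hpair, hk] at this
    exact (mul_nonneg_iff_of_pos_right hD).mp this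
  refine Submodule.sum_mem _ fun j _ => ?_
  rcases eq_or_ne j j₀ with rfl | hj
  · simp [ha₀]
  · exact Submodule.smul_mem _ (⟨a j, ha ⟨j, hj⟩⟩ : ℝ≥0) (Submodule.subset_span ⟨⟨j, hj⟩, rfl⟩)

lemma setOf_dual_line_add_cone (hf : LinearIndependent ℝ f) {e : Fin n → ℝ}
    (he₀ : ∀ j ≠ j₀, f j ⬝ᵥ e = 0) (he : f j₀ ⬝ᵥ e ≠ 0) {g : {j // j ≠ j₀} → Fin n → ℝ}
    (hD : 0 < D) (hg : ∀ j k : {j // j ≠ j₀}, f j ⬝ᵥ g k = if j = k then D else 0) :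
    {φ : Fin n → ℝ | ∀ q ∈ {q : Fin n → ℝ | ∃ (t : ℝ) (c : Fin n → ℝ),
        c ∈ (Submodule.span ℝ≥0 (Set.range g) : Set (Fin n → ℝ)) ∧ q = t • e + c}, 0 ≤ φ ⬝ᵥ q} =
      Submodule.span ℝ≥0 (Set.range fun j : {j // j ≠ j₀} => f j) := by
  ext φ
  constructor
  · intro hφ
    refine mem_span_facet_of_dotProduct hf he₀ he hD hg ?_ fun k => ?_
    · have h₁ := hφ _ ⟨1, 0, zero_mem _, rfl⟩
      have h₂ := hφ _ ⟨-1, 0, zero_mem _, rfl⟩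
      simp only [add_zero, one_smul, neg_smul, dotProduct_neg] at h₁ h₂
      linarith
    · simpa using hφ _ ⟨0, g k, Submodule.subset_span ⟨k, rfl⟩, rfl⟩
  · rintro hφ _ ⟨t, c, hc, rfl⟩
    rw [dotProduct_add, dotProduct_smul,
      dotProduct_eq_zero_of_mem_span (by rintro _ ⟨k, rfl⟩; exact he₀ k k.2) hφ, smul_zero,
      zero_add, dotProduct_comm]
    refine dotProduct_nonneg_of_mem_span ?_ hc
    rintro _ ⟨k, rfl⟩
    rw [dotProduct_comm]
    refine dotProduct_nonneg_of_mem_span ?_ hφ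
    rintro _ ⟨j, rfl⟩
    rw [hg]
    split_ifs <;> linarith

end FacetVectors

lemma nonempty_basis_gp {n : ℕ} {M : AddSubmonoid (Fin n → ℤ)} {z e : Fin n → ℤ}
    (hz : z ⬝ᵥ e = 1) (hM : gp M = (LinearMap.ker (dotProductEquiv ℤ (Fin n) z)).toAddSubgroup) :
    Nonempty (Module.Basis (Fin (n - 1)) ℤ (gp M)) := by
  set σ := dotProductEquiv ℤ (Fin n) z
  have hσ : Function.Surjective σ := fun a =>
    ⟨a • e, by rw [dotProductEquiv_apply_apply, dotProduct_smul, hz, smul_eq_mul, mul_one]⟩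
  have h := LinearMap.rank_eq_of_surjective hσ
  rw [Module.rank_self, rank_fun', ← Module.finrank_eq_rank ℤ (LinearMap.ker σ),
    Fintype.card_fin] at h
  have hrank : Module.finrank ℤ (LinearMap.ker σ) = n - 1 := by
    have : n = 1 + Module.finrank ℤ (LinearMap.ker σ) := by exact_mod_cast h
    omega
  let φ : LinearMap.ker σ ≃+ gp M := AddEquiv.addSubgroupCongr hM.symm
  exact ⟨(Module.finBasisOfFinrankEq ℤ _ hrank).map φ.toIntLinearEquiv⟩

end SimplicialCone

open SimplicialCone

theorem statement18_general {n : ℕ}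
    (w : Fin n → (Fin n → ℚ))
    (hli : LinearIndependent ℝ (fun j => fun i => ((w j i : ℝ)) : Fin n → Fin n → ℝ))
    (C : Set (Fin n → ℝ))
    (hC : C = (Submodule.span ℝ≥0
      (Set.range fun j => fun i => ((w j i : ℝ))) : Set (Fin n → ℝ)))
    (j₀ : Fin n)
    (F : Set (Fin n → ℝ))
    (hF : F = (Submodule.span ℝ≥0
      (Set.range fun j : {j : Fin n // j ≠ j₀} => fun i => ((w j.1 i : ℝ))) :
        Set (Fin n → ℝ)))
    (Cstar : Set (Fin n → ℝ))
    (hCstar : Cstar = {x | ∀ φ ∈ C, 0 ≤ dotP φ x})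
    (l : Set (Fin n → ℝ))
    (hl : l = {x ∈ Cstar | ∀ φ ∈ F, dotP φ x = 0})
    (e : Fin n → ℤ)
    (he : ∀ v : Fin n → ℤ, toR v ∈ l ↔ ∃ t : ℕ, v = (t : ℤ) • e) :
    ∃ M' : AddSubmonoid (Fin n → ℤ),
      -- M′ is affine, normal,
      M'.FG ∧ IsNormalMonoid M' ∧
      -- simplicial,
      (∃ u : Fin (n - 1) → (Fin n → ℝ), LinearIndependent ℝ u ∧
        coneM M' = (Submodule.span ℝ≥0 (Set.range u) : Set (Fin n → ℝ))) ∧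
      -- of rank n - 1,
      Nonempty (Module.Basis (Fin (n - 1)) ℤ (gp M')) ∧
      -- ℤ₋e + N₊ = ℤe + M′  (with N₊ = C* ∩ ℤⁿ) ...
      ({v : Fin n → ℤ | ∃ (z : ℕ) (u : Fin n → ℤ), toR u ∈ Cstar ∧ v = u - (z : ℤ) • e}
        = {v : Fin n → ℤ | ∃ (z : ℤ) (m : Fin n → ℤ), m ∈ M' ∧ v = z • e + m}) ∧
      -- ... and the sum ℤe + M′ is direct,
      (∀ (z z' : ℤ) (m m' : Fin n → ℤ), m ∈ M' → m' ∈ M' →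
        z • e + m = z' • e + m' → z = z' ∧ m = m') ∧
      -- and (ℝe + ℝ₊M′)* = F:
      {φ : Fin n → ℝ |
        ∀ q ∈ {q : Fin n → ℝ | ∃ (t : ℝ) (c : Fin n → ℝ), c ∈ coneM M' ∧ q = t • toR e + c},
          0 ≤ dotP φ q} = F := by
  set f : Fin n → Fin n → ℝ := fun j i => (w j i : ℝ)
  have hCstar' : Cstar = {x | ∀ j, 0 ≤ f j ⬝ᵥ x} := by
    rw [hCstar, hC]
    exact setOf_dual_span_range f
  have hl' : l = edge f j₀ := by
    rw [hl, hCstar', hF]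
    exact setOf_dual_inter_perp_eq_edge f j₀
  rw [hl'] at he
  obtain ⟨D, hD, b, hb⟩ := exists_int_dual_vectors w hli
  have hDR : (0 : ℝ) < D := by exact_mod_cast hD
  have hpos : 0 < f j₀ ⬝ᵥ toR e := dotProduct_generator_pos he hDR fun j => hb j j₀
  have he₀ := dotProduct_generator_eq_zero he
  obtain ⟨z, hz⟩ := exists_dotProduct_generator_eq_one he hpos
  obtain ⟨v, hv, hvz⟩ := exists_facet_vectors hb he₀ hz
  have hvM : ∀ k, v k ∈ facetMonoid f j₀ z := fun k =>
    ⟨hvz k, fun j hj => by rw [hv ⟨j, hj⟩ k]; split_ifs <;> linarith⟩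
  have hdec := fun x (hx : x ∈ facetMonoid f j₀ z) =>
    toR_eq_sum_of_dotProduct_eq_zero hli hz he₀ hpos.ne' hDR.ne' hv hvz (mem_facetMonoid.mp hx).1
  obtain ⟨ε⟩ : Nonempty (Fin (n - 1) ≃ {j // j ≠ j₀}) :=
    ⟨(Fintype.equivFinOfCardEq (by simp)).symm⟩
  refine ⟨facetMonoid f j₀ z, fg_facetMonoid hDR hv hvM hdec, isNormalMonoid_facetMonoid,
    ⟨fun i => toR (v (ε i)), ?_, ?_⟩, nonempty_basis_gp hz (gp_facetMonoid hDR hv hvM), ?_,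
    fun _ _ _ _ => eq_of_zsmul_add_eq hz, ?_⟩
  · exact (linearIndependent_of_dotProduct_eq_ite hDR.ne' hv).comp ε ε.injective
  · rw [coneM_facetMonoid hDR hvM hdec, ← ε.surjective.range_comp]
    rfl
  · ext x
    rw [hCstar']
    exact (exists_nonneg_sub_nsmul_iff he₀ hpos x).trans
      (exists_zsmul_add_mem_facetMonoid_iff hz he₀ x).symm
  · rw [coneM_facetMonoid hDR hvM hdec, hF]
    exact setOf_dual_line_add_cone hli he₀ hpos.ne' hDR hv

/-- let `C` be a rational simplicial n-cone in the dual space, `F` a facet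
of `C`, `l = C* ∩ F^⊥` the corresponding edge of the dual cone `C*`, `e` the lattice
generator of `l ∩ ℤⁿ` and `N₊ = C* ∩ ℤⁿ`. Then there is a rank-(n-1) simplicial normal
affine monoid `M′` with `ℤ₋e + N₊ = ℤe + M′` (a direct sum) and `(ℝe + ℝ₊M′)* = F`. -/
theorem statement18 {n : ℕ} (hn : 0 < n)
    (w : Fin n → (Fin n → ℚ))
    (hli : LinearIndependent ℝ (fun j => fun i => ((w j i : ℝ)) : Fin n → Fin n → ℝ))
    (C : Set (Fin n → ℝ))
    (hC : C = (Submodule.span ℝ≥0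
      (Set.range fun j => fun i => ((w j i : ℝ))) : Set (Fin n → ℝ)))
    (j₀ : Fin n)
    (F : Set (Fin n → ℝ))
    (hF : F = (Submodule.span ℝ≥0
      (Set.range fun j : {j : Fin n // j ≠ j₀} => fun i => ((w j.1 i : ℝ))) :
        Set (Fin n → ℝ)))
    (Cstar : Set (Fin n → ℝ))
    (hCstar : Cstar = {x | ∀ φ ∈ C, 0 ≤ dotP φ x})
    (l : Set (Fin n → ℝ))
    (hl : l = {x ∈ Cstar | ∀ φ ∈ F, dotP φ x = 0})
    (e : Fin n → ℤ)
    (he : ∀ v : Fin n → ℤ, toR v ∈ l ↔ ∃ t : ℕ, v = (t : ℤ) • e) :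
    ∃ M' : AddSubmonoid (Fin n → ℤ),
      -- M′ is affine, normal,
      M'.FG ∧ IsNormalMonoid M' ∧
      -- simplicial,
      (∃ u : Fin (n - 1) → (Fin n → ℝ), LinearIndependent ℝ u ∧
        coneM M' = (Submodule.span ℝ≥0 (Set.range u) : Set (Fin n → ℝ))) ∧
      -- of rank n - 1,
      Nonempty (Module.Basis (Fin (n - 1)) ℤ (gp M')) ∧
      -- ℤ₋e + N₊ = ℤe + M′  (with N₊ = C* ∩ ℤⁿ) ...
      ({v : Fin n → ℤ | ∃ (z : ℕ) (u : Fin n → ℤ), toR u ∈ Cstar ∧ v = u - (z : ℤ) • e}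
        = {v : Fin n → ℤ | ∃ (z : ℤ) (m : Fin n → ℤ), m ∈ M' ∧ v = z • e + m}) ∧
      -- ... and the sum ℤe + M′ is direct,
      (∀ (z z' : ℤ) (m m' : Fin n → ℤ), m ∈ M' → m' ∈ M' →
        z • e + m = z' • e + m' → z = z' ∧ m = m') ∧
      -- and (ℝe + ℝ₊M′)* = F:
      {φ : Fin n → ℝ |
        ∀ q ∈ {q : Fin n → ℝ | ∃ (t : ℝ) (c : Fin n → ℝ), c ∈ coneM M' ∧ q = t • toR e + c},
          0 ≤ dotP φ q} = F :=
  statement18_general w hli C hC j₀ F hF Cstar hCstar l hl e he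
end
end

section
/- Let M′ be a positive normal affine monoid of rank r inside ℤ^r ⊆ ℤ^n = ℤ ⊕ ℤ^r with e = (1,0), let {x₁,…,x_r} be a free basis of gp(M′) with ℝ₊M′ ⊆ ℝ₊x₁ + ⋯ + ℝ₊x_r, and let N₊ be a normal affine submonoid of ℤ^n with ℝ₊N₊ ⊆ ℝ₊e + ℝ₊M′ and e ∈ N₊. Then for all sufficiently large natural numbers c, the monoid M = ℤ^n ∩ (ℝ₊(x₁ − ce) + ⋯ + ℝ₊(x_r − ce)) satisfies both ℝ₊N₊ ⊆ ℝ₊e + ℝ₊M and ℝ₊N₊ ∩ ℝ₊M = {0}. -/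
open scoped NNReal
noncomputable section

/-- Real image of a vector in `ℤ ⊕ ℤ^r`. -/
def toRn {r : ℕ} (p : ℤ × (Fin r → ℤ)) : ℝ × (Fin r → ℝ) := ((p.1 : ℝ), toR p.2)

/-!
Write `e = (1, 0)` and `C_c = ℝ₊(x₁ - ce) + ⋯ + ℝ₊(x_r - ce)`, a cone spanned by lattice points, so
that `ℝ₊M = C_c`. Any `m ∈ ℝ₊x₁ + ⋯ + ℝ₊x_r`, say `m = ∑ bⱼ xⱼ`, satisfies
`m = (c ∑ bⱼ) e + ∑ bⱼ (xⱼ - ce) ∈ ℝ₊e + C_c`; together with `ℝ₊N₊ ⊆ ℝ₊e + ℝ₊M′` this gives the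
first inclusion. For the second, the `e`-coordinate is `≥ 0` on `ℝ₊N₊`, while on `C_c` it equals
`-c ∑ aⱼ`, which vanishes only at the origin as soon as `c ≥ 1`.
-/

open Submodule Set

theorem span_image_setOf_mem_span {R M α ι : Type*} [Semiring R] [AddCommMonoid M]
    [Module R M] (f : α → M) (g : ι → α) :
    span R (f '' {p | f p ∈ span R (range fun j => f (g j))}) =
      span R (range fun j => f (g j)) := by
  refine le_antisymm (span_le.mpr ?_) (span_le.mpr ?_)
  · rintro _ ⟨p, hp, rfl⟩
    exact hp
  · rintro _ ⟨j, rfl⟩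
    exact subset_span ⟨g j, subset_span ⟨j, rfl⟩, rfl⟩

section TiltedCone

variable {E ι : Type*} [AddCommGroup E] [Module ℝ E] [Fintype ι]

/-- The cone `ℝ₊(v₁ - ce) + ⋯ + ℝ₊(v_r - ce)` in `ℝ × E`, where `e = (1, 0)`. -/
def tiltedCone (c : ℝ≥0) (v : ι → E) : Submodule ℝ≥0 (ℝ × E) :=
  span ℝ≥0 (range fun j => (-(c : ℝ), v j))

theorem exists_inr_eq_smul_add_mem_tiltedCone (c : ℝ≥0) {v : ι → E} {m : E}
    (hm : m ∈ span ℝ≥0 (range v)) :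
    ∃ t : ℝ≥0, ∃ n ∈ tiltedCone c v, ((0 : ℝ), m) = t • ((1 : ℝ), (0 : E)) + n := by
  obtain ⟨b, rfl⟩ := mem_span_range_iff_exists_fun ℝ≥0 |>.mp hm
  refine ⟨c * ∑ j, b j, ∑ j, b j • (-(c : ℝ), v j),
    sum_mem fun j _ => smul_mem _ _ (subset_span ⟨j, rfl⟩), ?_⟩
  ext
  · simp [Prod.fst_sum, NNReal.smul_def, Finset.mul_sum, mul_comm]
  · simp [Prod.snd_sum]

theorem eq_zero_of_mem_tiltedCone_of_fst_nonneg {c : ℝ≥0} (hc : 0 < c) {v : ι → E}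
    {q : ℝ × E} (hq : q ∈ tiltedCone c v) (hq₁ : 0 ≤ q.1) : q = 0 := by
  obtain ⟨a, rfl⟩ := mem_span_range_iff_exists_fun ℝ≥0 |>.mp hq
  have hfst : (∑ j, a j • (-(c : ℝ), v j)).1 = -((c * ∑ j, a j : ℝ≥0) : ℝ) := by
    simp [Prod.fst_sum, NNReal.smul_def, Finset.mul_sum, mul_comm]
  have hsum : ∑ j, a j = 0 := by
    rw [hfst, neg_nonneg, ← NNReal.coe_zero, NNReal.coe_le_coe, nonpos_iff_eq_zero,
      mul_eq_zero] at hq₁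
    exact hq₁.resolve_left hc.ne'
  simp [Finset.sum_eq_zero_iff.mp hsum]

end TiltedCone

theorem toRn_eVec (r : ℕ) : toRn (eVec r) = ((1 : ℝ), (0 : Fin r → ℝ)) := by
  ext <;> simp [toRn, eVec, toR]

theorem span_toRn_setOf_mem_span_eq_tiltedCone {r : ℕ} (c : ℕ) (x : Fin r → Fin r → ℤ) :
    span ℝ≥0 (toRn '' {p : ℤ × (Fin r → ℤ) |
        toRn p ∈ span ℝ≥0 (range fun j => toRn ((-(c : ℤ), x j)))}) =
      tiltedCone c fun j => toR (x j) := by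
  rw [span_image_setOf_mem_span toRn fun j => ((-(c : ℤ), x j) : ℤ × (Fin r → ℤ))]
  simp [tiltedCone, toRn]

theorem statement19_general {r : ℕ} (M' : AddSubmonoid (Fin r → ℤ))
    (x : Fin r → (Fin r → ℤ))
    (hcone : coneM M' ⊆
      (Submodule.span ℝ≥0 (Set.range fun j => toR (x j)) : Set (Fin r → ℝ)))
    (Nplus : AddSubmonoid (ℤ × (Fin r → ℤ)))
    -- ℝ₊N₊ ⊆ ℝ₊e + ℝ₊M′ :
    (hNcone : ∀ q ∈ (Submodule.span ℝ≥0 (toRn '' (Nplus : Set (ℤ × (Fin r → ℤ)))) :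
        Set (ℝ × (Fin r → ℝ))),
      ∃ (t : ℝ≥0) (mR : Fin r → ℝ), mR ∈ coneM M' ∧ q = t • toRn (eVec r) + ((0 : ℝ), mR)) :
    ∃ c₀ : ℕ, ∀ c : ℕ, c₀ ≤ c →
      -- with M = ℤⁿ ∩ (ℝ₊(x₁ - ce) + ⋯ + ℝ₊(x_r - ce)), whose cone is
      -- ℝ₊M = ℝ₊(toRn '' M) for M = {p | toRn p ∈ span ℝ₊ {x_j - ce}}:
      (∀ q ∈ (Submodule.span ℝ≥0 (toRn '' (Nplus : Set (ℤ × (Fin r → ℤ)))) :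
          Set (ℝ × (Fin r → ℝ))),
        ∃ (t : ℝ≥0) (m : ℝ × (Fin r → ℝ)),
          m ∈ (Submodule.span ℝ≥0
            (toRn '' {p : ℤ × (Fin r → ℤ) | toRn p ∈
              (Submodule.span ℝ≥0 (Set.range fun j => toRn ((-(c : ℤ), x j))) :
                Set (ℝ × (Fin r → ℝ)))}) : Set (ℝ × (Fin r → ℝ))) ∧
          q = t • toRn (eVec r) + m) ∧
      (∀ q ∈ (Submodule.span ℝ≥0 (toRn '' (Nplus : Set (ℤ × (Fin r → ℤ)))) :
          Set (ℝ × (Fin r → ℝ))),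
        q ∈ (Submodule.span ℝ≥0
            (toRn '' {p : ℤ × (Fin r → ℤ) | toRn p ∈
              (Submodule.span ℝ≥0 (Set.range fun j => toRn ((-(c : ℤ), x j))) :
                Set (ℝ × (Fin r → ℝ)))}) : Set (ℝ × (Fin r → ℝ))) →
        q = 0) := by
  refine ⟨1, fun c hc => ?_⟩
  simp only [SetLike.mem_coe, span_toRn_setOf_mem_span_eq_tiltedCone]
  constructor
  · intro q hq
    obtain ⟨t, mR, hmR, rfl⟩ := hNcone q hq
    obtain ⟨s, n, hn, hmn⟩ := exists_inr_eq_smul_add_mem_tiltedCone (c : ℝ≥0) (hcone hmR)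
    exact ⟨t + s, n, hn, by rw [hmn, toRn_eVec, add_smul, add_assoc]⟩
  · intro q hq hqM
    obtain ⟨t, mR, -, rfl⟩ := hNcone q hq
    refine eq_zero_of_mem_tiltedCone_of_fst_nonneg (by exact_mod_cast hc) hqM ?_
    simp [toRn_eVec, NNReal.smul_def]

/-- given a positive normal affine monoid M′ of rank r (inside
ℤⁿ = ℤ ⊕ ℤ^r, e = (1,0)), a basis x₁,…,x_r of gp(M′) with ℝ₊M′ ⊆ ℝ₊x₁ + ⋯ + ℝ₊x_r, and
a normal affine submonoid N₊ of ℤⁿ with e ∈ N₊ and ℝ₊N₊ ⊆ ℝ₊e + ℝ₊M′, then for all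
sufficiently large c the monoid M = ℤⁿ ∩ (ℝ₊(x₁ - ce) + ⋯ + ℝ₊(x_r - ce)) satisfies
ℝ₊N₊ ⊆ ℝ₊e + ℝ₊M and ℝ₊N₊ ∩ ℝ₊M = {0}. -/
theorem statement19 {r : ℕ} (M' : AddSubmonoid (Fin r → ℤ))
    (hFG : M'.FG) (hpos : IsPositiveMonoid M') (hnorm : IsNormalMonoid M')
    (hgp : gp M' = ⊤)
    (x : Fin r → (Fin r → ℤ)) (hx : ∃ b : Module.Basis (Fin r) ℤ (Fin r → ℤ), x = ⇑b)
    (hcone : coneM M' ⊆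
      (Submodule.span ℝ≥0 (Set.range fun j => toR (x j)) : Set (Fin r → ℝ)))
    (Nplus : AddSubmonoid (ℤ × (Fin r → ℤ)))
    (hNFG : Nplus.FG) (hNnorm : IsNormalMonoid Nplus)
    (hNpointed : IsPositiveMonoid Nplus)
    (heN : eVec r ∈ Nplus)
    -- ℝ₊N₊ ⊆ ℝ₊e + ℝ₊M′ :
    (hNcone : ∀ q ∈ (Submodule.span ℝ≥0 (toRn '' (Nplus : Set (ℤ × (Fin r → ℤ)))) :
        Set (ℝ × (Fin r → ℝ))),
      ∃ (t : ℝ≥0) (mR : Fin r → ℝ), mR ∈ coneM M' ∧ q = t • toRn (eVec r) + ((0 : ℝ), mR)) :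
    ∃ c₀ : ℕ, ∀ c : ℕ, c₀ ≤ c →
      -- with M = ℤⁿ ∩ (ℝ₊(x₁ - ce) + ⋯ + ℝ₊(x_r - ce)), whose cone is
      -- ℝ₊M = ℝ₊(toRn '' M) for M = {p | toRn p ∈ span ℝ₊ {x_j - ce}}:
      (∀ q ∈ (Submodule.span ℝ≥0 (toRn '' (Nplus : Set (ℤ × (Fin r → ℤ)))) :
          Set (ℝ × (Fin r → ℝ))),
        ∃ (t : ℝ≥0) (m : ℝ × (Fin r → ℝ)),
          m ∈ (Submodule.span ℝ≥0
            (toRn '' {p : ℤ × (Fin r → ℤ) | toRn p ∈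
              (Submodule.span ℝ≥0 (Set.range fun j => toRn ((-(c : ℤ), x j))) :
                Set (ℝ × (Fin r → ℝ)))}) : Set (ℝ × (Fin r → ℝ))) ∧
          q = t • toRn (eVec r) + m) ∧
      (∀ q ∈ (Submodule.span ℝ≥0 (toRn '' (Nplus : Set (ℤ × (Fin r → ℤ)))) :
          Set (ℝ × (Fin r → ℝ))),
        q ∈ (Submodule.span ℝ≥0
            (toRn '' {p : ℤ × (Fin r → ℤ) | toRn p ∈
              (Submodule.span ℝ≥0 (Set.range fun j => toRn ((-(c : ℤ), x j))) :
                Set (ℝ × (Fin r → ℝ)))}) : Set (ℝ × (Fin r → ℝ))) →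
        q = 0) :=
  statement19_general M' x hcone Nplus hNcone
end
end
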